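/- arXiv:1903.08776 — 4 statements merged into one kernel-verified Lean document; each statement's English description precedes it below -/
import Mathlib

section
/- Suppose the N-player Riccati system has a solution (P_1, …, P_N) on a subinterval [τ, T] ⊆ [0, T] (each P_i : [τ,T] → ℝ^{Nn×Nn} differentiable and satisfying the system). Then such a solution is unique, and for every i ∈ {1,…,N} and every t ∈ [τ, T], the matrix P_i(t) is symmetric. -/
open Matrix

/-- `Â = I_N ⊗ A + (1/N)(𝟙_{N×N} ⊗ G)`, written entrywise. -/
noncomputable def hatA (n N : ℕ) (A G : Matrix (Fin n) (Fin n) ℝ) :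
    Matrix (Fin N × Fin n) (Fin N × Fin n) ℝ :=
  Matrix.of fun p q => (if p.1 = q.1 then A p.2 q.2 else 0) + (1 / (N : ℝ)) * G p.2 q.2

/-- `B_k = e_k ⊗ B`. -/
noncomputable def Bblk (n n1 N : ℕ) (B : Matrix (Fin n) (Fin n1) ℝ) (k : Fin N) :
    Matrix (Fin N × Fin n) (Fin n1) ℝ :=
  Matrix.of fun p c => if p.1 = k then B p.2 c else 0

/-- `K_i = [0,…,0, I_n, 0,…,0] − (1/N)[Γ, …, Γ]` with `I_n` in the `i`-th block. -/
noncomputable def Kblk (n N : ℕ) (Γ : Matrix (Fin n) (Fin n) ℝ) (i : Fin N) :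
    Matrix (Fin n) (Fin N × Fin n) ℝ :=
  Matrix.of fun r q => (if q.1 = i ∧ r = q.2 then (1 : ℝ) else 0) - (1 / (N : ℝ)) * Γ r q.2

/-- `Q_i = K_iᵀ Q K_i` (and `Q_{if} = K_{if}ᵀ Q_f K_{if}` with `Γ_f, Q_f`). -/
noncomputable def Qblk (n N : ℕ) (Q Γ : Matrix (Fin n) (Fin n) ℝ) (i : Fin N) :
    Matrix (Fin N × Fin n) (Fin N × Fin n) ℝ :=
  (Kblk n N Γ i)ᵀ * Q * Kblk n N Γ i

/-- Right-hand side of the `N`-player Riccati system: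
`−(P_i Â + Âᵀ P_i) + P_i Σ_k B_k R⁻¹ B_kᵀ P_k + Σ_k P_k B_k R⁻¹ B_kᵀ P_i
  − P_i B_i R⁻¹ B_iᵀ P_i − Q_i`. -/
noncomputable def riccatiRHS (n n1 N : ℕ) (A G Q Γ : Matrix (Fin n) (Fin n) ℝ)
    (B : Matrix (Fin n) (Fin n1) ℝ) (R : Matrix (Fin n1) (Fin n1) ℝ)
    (P : Fin N → Matrix (Fin N × Fin n) (Fin N × Fin n) ℝ) (i : Fin N) :
    Matrix (Fin N × Fin n) (Fin N × Fin n) ℝ :=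
  -(P i * hatA n N A G + (hatA n N A G)ᵀ * P i)
    + P i * (∑ k, Bblk n n1 N B k * R⁻¹ * (Bblk n n1 N B k)ᵀ * P k)
    + (∑ k, P k * Bblk n n1 N B k * R⁻¹ * (Bblk n n1 N B k)ᵀ) * P i
    - P i * Bblk n n1 N B i * R⁻¹ * (Bblk n n1 N B i)ᵀ * P i
    - Qblk n N Q Γ i

/-- `(P_1, …, P_N)` solves the `N`-player Riccati terminal value problem on `[τ, T]`:
each `P_i` is differentiable on `[τ,T]` with derivative given by the Riccati right-hand
side (entrywise), and `P_i(T) = Q_{if}`. -/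
def IsRiccatiSol (n n1 N : ℕ) (A G Q Qf Γ Γf : Matrix (Fin n) (Fin n) ℝ)
    (B : Matrix (Fin n) (Fin n1) ℝ) (R : Matrix (Fin n1) (Fin n1) ℝ) (τ T : ℝ)
    (P : Fin N → ℝ → Matrix (Fin N × Fin n) (Fin N × Fin n) ℝ) : Prop :=
  (∀ i, ∀ t ∈ Set.Icc τ T, ∀ p q,
      HasDerivWithinAt (fun s => P i s p q)
        (riccatiRHS n n1 N A G Q Γ B R (fun k => P k t) i p q) (Set.Icc τ T) t)
  ∧ ∀ i, P i T = Qblk n N Qf Γf i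

/-! The right-hand side of the Riccati system is polynomial in the entries of `(P_1, …, P_N)`,
hence locally Lipschitz, so the terminal value problem has at most one solution. Since `Q`,
`Q_f` and `R` are symmetric, transposing every `P_i` maps solutions to solutions; by uniqueness
`P_iᵀ = P_i`. -/

open Set

theorem ODE_solution_unique_of_locallyLipschitz_left
    {E : Type*} [NormedAddCommGroup E] [NormedSpace ℝ E]
    {v : E → E} (hv : LocallyLipschitz v) {f g : ℝ → E} {a b : ℝ}
    (hf : ∀ t ∈ Icc a b, HasDerivWithinAt f (v (f t)) (Icc a b) t)
    (hg : ∀ t ∈ Icc a b, HasDerivWithinAt g (v (g t)) (Icc a b) t)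
    (hb : f b = g b) : EqOn f g (Icc a b) := by
  have hfc : ContinuousOn f (Icc a b) := fun t ht => (hf t ht).continuousWithinAt
  have hgc : ContinuousOn g (Icc a b) := fun t ht => (hg t ht).continuousWithinAt
  -- `v` need only be Lipschitz on the compact set swept out by the two trajectories.
  obtain ⟨K, hK⟩ := hv.locallyLipschitzOn.exists_lipschitzOnWith_of_compact
    ((isCompact_Icc.image_of_continuousOn hfc).union (isCompact_Icc.image_of_continuousOn hgc))
  have left_deriv {h : ℝ → E} (hh : ∀ t ∈ Icc a b, HasDerivWithinAt h (v (h t)) (Icc a b) t)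
      (t : ℝ) (ht : t ∈ Ioc a b) : HasDerivWithinAt h (v (h t)) (Iic t) t :=
    (hh t (Ioc_subset_Icc_self ht)).mono_of_mem_nhdsWithin (Icc_mem_nhdsLE_of_mem ht)
  exact ODE_solution_unique_of_mem_Icc_left (v := fun _ => v) (fun _ _ => hK)
    hfc (left_deriv hf) (fun t ht => .inl (mem_image_of_mem f (Ioc_subset_Icc_self ht)))
    hgc (left_deriv hg) (fun t ht => .inr (mem_image_of_mem g (Ioc_subset_Icc_self ht))) hb

/-- The Riccati right-hand side as a vector field on the entries of `(P_1, …, P_N)`;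
`Matrix` has no global norm, so the state space is the underlying function type. -/
noncomputable def riccatiField (n n1 N : ℕ) (A G Q Γ : Matrix (Fin n) (Fin n) ℝ)
    (B : Matrix (Fin n) (Fin n1) ℝ) (R : Matrix (Fin n1) (Fin n1) ℝ)
    (X : Fin N → Fin N × Fin n → Fin N × Fin n → ℝ) :
    Fin N → Fin N × Fin n → Fin N × Fin n → ℝ :=
  fun i p q => riccatiRHS n n1 N A G Q Γ B R (fun k => Matrix.of (X k)) i p q

theorem contDiff_riccatiField (n n1 N : ℕ) (A G Q Γ : Matrix (Fin n) (Fin n) ℝ)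
    (B : Matrix (Fin n) (Fin n1) ℝ) (R : Matrix (Fin n1) (Fin n1) ℝ) :
    ContDiff ℝ 1 (riccatiField n n1 N A G Q Γ B R) := by
  refine contDiff_pi.2 fun i => contDiff_pi.2 fun p => contDiff_pi.2 fun q => ?_
  simp only [riccatiField, riccatiRHS, Matrix.sub_apply, Matrix.add_apply, Matrix.neg_apply,
    Matrix.mul_apply, Matrix.sum_apply, Matrix.of_apply]
  fun_prop

theorem Qblk_isSymm {n N : ℕ} {Q : Matrix (Fin n) (Fin n) ℝ} (hQ : Q.IsSymm)
    (Γ : Matrix (Fin n) (Fin n) ℝ) (i : Fin N) : (Qblk n N Q Γ i).IsSymm := by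
  simp only [Matrix.IsSymm, Qblk, Matrix.transpose_mul, Matrix.transpose_transpose, hQ.eq,
    Matrix.mul_assoc]

theorem riccatiRHS_transpose {n n1 N : ℕ} (A G : Matrix (Fin n) (Fin n) ℝ)
    {Q : Matrix (Fin n) (Fin n) ℝ} (hQ : Q.IsSymm) (Γ : Matrix (Fin n) (Fin n) ℝ)
    (B : Matrix (Fin n) (Fin n1) ℝ) {R : Matrix (Fin n1) (Fin n1) ℝ} (hR : R.IsSymm)
    (P : Fin N → Matrix (Fin N × Fin n) (Fin N × Fin n) ℝ) (i : Fin N) :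
    riccatiRHS n n1 N A G Q Γ B R (fun k => (P k)ᵀ) i =
      (riccatiRHS n n1 N A G Q Γ B R P i)ᵀ := by
  simp only [riccatiRHS, (Qblk_isSymm hQ Γ i).eq, hR.inv.eq, Matrix.transpose_sub,
    Matrix.transpose_add, Matrix.transpose_neg, Matrix.transpose_mul, Matrix.transpose_sum,
    Matrix.transpose_transpose, Finset.sum_mul, Finset.mul_sum, Matrix.mul_assoc]
  abel

section IsRiccatiSol

variable {n n1 N : ℕ} {A G Q Qf Γ Γf : Matrix (Fin n) (Fin n) ℝ}
  {B : Matrix (Fin n) (Fin n1) ℝ} {R : Matrix (Fin n1) (Fin n1) ℝ} {τ T : ℝ}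

theorem IsRiccatiSol.hasDerivWithinAt
    {P : Fin N → ℝ → Matrix (Fin N × Fin n) (Fin N × Fin n) ℝ}
    (hP : IsRiccatiSol n n1 N A G Q Qf Γ Γf B R τ T P) {t : ℝ} (ht : t ∈ Icc τ T) :
    HasDerivWithinAt (fun s i p q => P i s p q)
      (riccatiField n n1 N A G Q Γ B R fun i p q => P i t p q) (Icc τ T) t :=
  hasDerivWithinAt_pi.2 fun i => hasDerivWithinAt_pi.2 fun p => hasDerivWithinAt_pi.2 fun q =>
    hP.1 i t ht p q

theorem IsRiccatiSol.unique {P P' : Fin N → ℝ → Matrix (Fin N × Fin n) (Fin N × Fin n) ℝ}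
    (hP : IsRiccatiSol n n1 N A G Q Qf Γ Γf B R τ T P)
    (hP' : IsRiccatiSol n n1 N A G Q Qf Γ Γf B R τ T P') {i : Fin N} {t : ℝ}
    (ht : t ∈ Icc τ T) : P i t = P' i t := by
  have hT : (fun i p q => P i T p q) = fun i p q => P' i T p q := by
    funext i p q; rw [hP.2, hP'.2]
  exact congrFun (ODE_solution_unique_of_locallyLipschitz_left
    (contDiff_riccatiField n n1 N A G Q Γ B R).locallyLipschitz
    (fun s hs => hP.hasDerivWithinAt hs) (fun s hs => hP'.hasDerivWithinAt hs) hT ht) i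

theorem IsRiccatiSol.transpose {P : Fin N → ℝ → Matrix (Fin N × Fin n) (Fin N × Fin n) ℝ}
    (hQ : Q.IsSymm) (hQf : Qf.IsSymm) (hR : R.IsSymm)
    (hP : IsRiccatiSol n n1 N A G Q Qf Γ Γf B R τ T P) :
    IsRiccatiSol n n1 N A G Q Qf Γ Γf B R τ T fun i t => (P i t)ᵀ := by
  refine ⟨fun i t ht p q => ?_, fun i => ?_⟩
  · rw [riccatiRHS_transpose A G hQ Γ B hR]
    exact hP.1 i t ht q p
  · exact (congrArg Matrix.transpose (hP.2 i)).trans (Qblk_isSymm hQf Γf i).eq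

end IsRiccatiSol

theorem riccati_solution_unique_and_symmetric_general
    (n n1 N : ℕ)
    (T : ℝ)
    (A G Q Qf Γ Γf : Matrix (Fin n) (Fin n) ℝ)
    (B : Matrix (Fin n) (Fin n1) ℝ) (R : Matrix (Fin n1) (Fin n1) ℝ)
    (hQ : Q.PosSemidef) (hQf : Qf.PosSemidef) (hR : R.PosDef)
    (τ : ℝ)
    (P P' : Fin N → ℝ → Matrix (Fin N × Fin n) (Fin N × Fin n) ℝ)
    (hP : IsRiccatiSol n n1 N A G Q Qf Γ Γf B R τ T P)
    (hP' : IsRiccatiSol n n1 N A G Q Qf Γ Γf B R τ T P') :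
    (∀ i, ∀ t ∈ Set.Icc τ T, P i t = P' i t) ∧
    (∀ i, ∀ t ∈ Set.Icc τ T, (P i t)ᵀ = P i t) := by
  have hPt := hP.transpose (Matrix.isHermitian_iff_isSymm.1 hQ.1)
    (Matrix.isHermitian_iff_isSymm.1 hQf.1) (Matrix.isHermitian_iff_isSymm.1 hR.1)
  exact ⟨fun i t ht => hP.unique hP' ht, fun i t ht => (hP.unique hPt ht).symm⟩

/-- If the `N`-player Riccati system has a solution on a subinterval
`[τ, T] ⊆ [0, T]`, then the solution is unique there, and each `P_i(t)` is symmetric. -/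
theorem riccati_solution_unique_and_symmetric
    (n n1 N : ℕ) (hn : 0 < n) (hn1 : 0 < n1) (hN : 0 < N)
    (T : ℝ) (hT : 0 < T)
    (A G Q Qf Γ Γf : Matrix (Fin n) (Fin n) ℝ)
    (B : Matrix (Fin n) (Fin n1) ℝ) (R : Matrix (Fin n1) (Fin n1) ℝ)
    (hQ : Q.PosSemidef) (hQf : Qf.PosSemidef) (hR : R.PosDef)
    (τ : ℝ) (hτ0 : 0 ≤ τ) (hτT : τ ≤ T)
    (P P' : Fin N → ℝ → Matrix (Fin N × Fin n) (Fin N × Fin n) ℝ)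
    (hP : IsRiccatiSol n n1 N A G Q Qf Γ Γf B R τ T P)
    (hP' : IsRiccatiSol n n1 N A G Q Qf Γ Γf B R τ T P') :
    (∀ i, ∀ t ∈ Set.Icc τ T, P i t = P' i t) ∧
    (∀ i, ∀ t ∈ Set.Icc τ T, (P i t)ᵀ = P i t) :=
  riccati_solution_unique_and_symmetric_general n n1 N T A G Q Qf Γ Γf B R hQ hQf hR τ P P' hP hP'
end

section
/- Under assumptions (A1)–(A4): if the initial value problem ẋ = f(t,x), x(0) = z has a (Carathéodory) solution x^z on [0, T], then there exist ε̄ ∈ (0,1] and a constant C such that for all 0 < ε ≤ ε̄, the perturbed initial value problem ẏ = f(t,y) + g(ε,t,y), y(0) = z_ε has a solution y^ε on [0, T], and sup_{0≤t≤T} |y^ε(t) − x^z(t)| ≤ C(|z_ε − z| + δ_ε), where δ_ε = ∫_0^T |g(ε, τ, x^z(τ))| dτ. -/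
/-!
Let `M` bound the reference solution `x` on `[0, T]`. Composing the perturbed field with the
radial retraction onto the closed ball of radius `M + 1` (and setting it to `0` outside `[0, T]`)
makes it bounded and globally Lipschitz, say with constant `L`. Its Picard operator `Φ` on bounded
continuous functions then satisfies `‖Φᵏ u - Φᵏ v‖ ≤ (L T)ᵏ / k! ‖u - v‖`, so some iterate is a
contraction; the fixed point `y` solves the truncated problem, and telescoping the iterates started
at `x` gives `‖y - x‖ ≤ 2 e^{L T} ‖Φ x - x‖ ≤ 2 e^{L T} (‖z_ε - z‖ + δ_ε)`. For small `ε` this is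
at most `1`, so `y` stays in the ball where the truncation is inactive and solves the perturbed
problem.
-/

open Set MeasureTheory intervalIntegral

/-- A (Carathéodory) solution of `ẏ = φ(t, y)`, `y(0) = y₀`, on `[0, T]`:
an (absolutely) continuous function satisfying the corresponding integral equation. -/
def IsCaraSol (K : ℕ) (T : ℝ)
    (φ : ℝ → EuclideanSpace ℝ (Fin K) → EuclideanSpace ℝ (Fin K))
    (y₀ : EuclideanSpace ℝ (Fin K)) (y : ℝ → EuclideanSpace ℝ (Fin K)) : Prop :=
  ContinuousOn y (Set.Icc 0 T) ∧ y 0 = y₀ ∧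
  IntervalIntegrable (fun τ => φ τ (y τ)) MeasureTheory.volume 0 T ∧
  ∀ t ∈ Set.Icc 0 T, y t = y₀ + ∫ τ in (0:ℝ)..t, φ τ (y τ)

open TopologicalSpace
open scoped NNReal BoundedContinuousFunction

section RadialRetraction

variable {E : Type*} [NormedAddCommGroup E] [NormedSpace ℝ E]

-- At `v = 0` the junk value `r / 0 = 0` is harmless.
noncomputable def radialRetraction (r : ℝ) (v : E) : E := min 1 (r / ‖v‖) • v

lemma radialRetraction_of_norm_le {r : ℝ} {v : E} (h : ‖v‖ ≤ r) : radialRetraction r v = v := by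
  rcases eq_or_ne v 0 with rfl | hv
  · simp [radialRetraction]
  · rw [radialRetraction, min_eq_left ((one_le_div (norm_pos_iff.2 hv)).2 h), one_smul]

lemma norm_radialRetraction {r : ℝ} (hr : 0 ≤ r) (v : E) :
    ‖radialRetraction r v‖ = min ‖v‖ r := by
  rcases eq_or_ne v 0 with rfl | hv
  · simp [radialRetraction, hr]
  · have hv' := norm_pos_iff.2 hv
    rw [radialRetraction, norm_smul, Real.norm_of_nonneg (by positivity),
      min_mul_of_nonneg _ _ hv'.le, one_mul, div_mul_cancel₀ _ hv'.ne']

lemma radialRetraction_mem_closedBall {r : ℝ} (hr : 0 ≤ r) (v : E) :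
    radialRetraction r v ∈ Metric.closedBall 0 r := by
  rw [mem_closedBall_zero_iff, norm_radialRetraction hr]
  exact min_le_right _ _

lemma lipschitzWith_radialRetraction {r : ℝ} (hr : 0 ≤ r) :
    LipschitzWith 2 (radialRetraction r : E → E) := by
  refine LipschitzWith.of_dist_le_mul fun u v => ?_
  wlog huv : ‖v‖ ≤ ‖u‖ generalizing u v
  · rw [dist_comm, dist_comm u]
    exact this v u (le_of_not_ge huv)
  rw [dist_eq_norm, dist_eq_norm, NNReal.coe_ofNat]
  rcases le_or_gt ‖u‖ r with hu | hu
  · rw [radialRetraction_of_norm_le hu, radialRetraction_of_norm_le (huv.trans hu)]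
    linarith [norm_nonneg (u - v)]
  have hu₀ : 0 < ‖u‖ := hr.trans_lt hu
  set a := r / ‖u‖
  set b := min 1 (r / ‖v‖)
  have ha : radialRetraction r u = a • u := by
    rw [radialRetraction, min_eq_right ((div_le_one hu₀).2 hu.le)]
  have ha₁ : a ≤ 1 := (div_le_one hu₀).2 hu.le
  have hau : a * ‖u‖ = r := div_mul_cancel₀ _ hu₀.ne'
  have hbv : b * ‖v‖ = min ‖v‖ r := by
    rw [← norm_radialRetraction hr v, radialRetraction, norm_smul,
      Real.norm_of_nonneg (le_min zero_le_one (by positivity))]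
  -- `a ‖v‖ ≤ b ‖v‖ ≤ a ‖v‖ + (‖u‖ - ‖v‖)` because `a ‖u‖ = r` and `b ‖v‖ = min ‖v‖ r`
  have hsub : ‖(a - b) • v‖ ≤ ‖u‖ - ‖v‖ := by
    rw [norm_smul, Real.norm_eq_abs, ← abs_norm v, ← abs_mul, abs_norm, sub_mul, hbv, abs_le]
    have : 0 ≤ a := by positivity
    constructor
    · nlinarith [min_le_right ‖v‖ r, mul_le_mul_of_nonneg_left huv this]
    · nlinarith [le_min (mul_le_of_le_one_left (norm_nonneg v) ha₁)
        (hau ▸ mul_le_mul_of_nonneg_left huv this : a * ‖v‖ ≤ r)]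
  calc ‖radialRetraction r u - radialRetraction r v‖
      = ‖a • (u - v) + (a - b) • v‖ := by
        rw [ha, show radialRetraction r v = b • v from rfl, smul_sub, sub_smul]
        abel_nf
    _ ≤ a * ‖u - v‖ + (‖u‖ - ‖v‖) := by
        refine (norm_add_le _ _).trans (add_le_add ?_ hsub)
        rw [norm_smul, Real.norm_of_nonneg (by positivity)]
    _ ≤ 2 * ‖u - v‖ := by
        nlinarith [norm_sub_norm_le u v, norm_nonneg (u - v)]

end RadialRetraction

theorem exists_isFixedPt_dist_le_of_dist_iterate_le {X : Type*} [MetricSpace X] [CompleteSpace X]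
    {Φ : X → X} {c : ℝ} (hc : 0 ≤ c)
    (hΦ : ∀ k u v, dist (Φ^[k] u) (Φ^[k] v) ≤ c ^ k / k.factorial * dist u v) (u : X) :
    ∃ y, Function.IsFixedPt Φ y ∧ dist u y ≤ 2 * Real.exp c * dist u (Φ u) := by
  have : Nonempty X := ⟨u⟩
  obtain ⟨n, hn⟩ : ∃ n : ℕ, c ^ n / n.factorial ≤ 1 / 2 :=
    ((FloorSemiring.tendsto_pow_div_factorial_atTop c).eventually
      (eventually_le_nhds one_half_pos)).exists
  have hcontr : ContractingWith (1 / 2) Φ^[n] := by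
    refine ⟨by rw [← NNReal.coe_lt_coe]; norm_num, LipschitzWith.of_dist_le_mul fun v w => ?_⟩
    exact (hΦ n v w).trans (by push_cast; gcongr)
  refine ⟨_, hcontr.isFixedPt_fixedPoint_iterate, ?_⟩
  have htelescope : dist u (Φ^[n] u) ≤ Real.exp c * dist u (Φ u) :=
    calc dist u (Φ^[n] u) ≤ ∑ k ∈ Finset.range n, dist (Φ^[k] u) (Φ^[k] (Φ u)) := by
          simpa [Function.iterate_succ_apply] using dist_le_range_sum_dist (Φ^[·] u) n
      _ ≤ ∑ k ∈ Finset.range n, c ^ k / k.factorial * dist u (Φ u) :=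
          Finset.sum_le_sum fun k _ => hΦ k u (Φ u)
      _ ≤ Real.exp c * dist u (Φ u) := by
          rw [← Finset.sum_mul]
          exact mul_le_mul_of_nonneg_right (Real.sum_le_exp_of_nonneg hc n) dist_nonneg
  calc dist u (ContractingWith.fixedPoint _ hcontr) ≤ dist u (Φ^[n] u) / (1 - (1 / 2 : ℝ≥0)) :=
        hcontr.dist_fixedPoint_le u
    _ ≤ 2 * Real.exp c * dist u (Φ u) := by
        norm_num
        linarith

theorem stronglyMeasurable_comp_of_caratheodory {α E F : Type*} [MeasurableSpace α]
    [TopologicalSpace α] [OpensMeasurableSpace α] [TopologicalSpace E] [MetrizableSpace E]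
    [SecondCountableTopology E] [TopologicalSpace F] [PseudoMetrizableSpace F] {φ : α → E → F}
    (hmeas : ∀ v, StronglyMeasurable (φ · v)) (hcont : ∀ t, Continuous (φ t)) {u : α → E}
    (hu : Continuous u) : StronglyMeasurable fun t => φ t (u t) := by
  borelize E
  exact (stronglyMeasurable_uncurry_of_continuous_of_stronglyMeasurable (u := fun v t => φ t v)
    hcont hmeas).comp_measurable (hu.measurable.prodMk measurable_id)

section Integrability

variable {E : Type*} [NormedAddCommGroup E] [SecondCountableTopology E] {φ : ℝ → E → E} {B T : ℝ}

lemma intervalIntegrable_comp_of_norm_le (hmeas : ∀ v, StronglyMeasurable (φ · v))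
    (hcont : ∀ t, Continuous (φ t)) (hB : ∀ t v, ‖φ t v‖ ≤ B) {u : ℝ → E} (hu : Continuous u)
    (a b : ℝ) :
    IntervalIntegrable (fun τ => φ τ (u τ)) volume a b :=
  intervalIntegrable_const.mono_fun
    (stronglyMeasurable_comp_of_caratheodory hmeas hcont hu).aestronglyMeasurable
    (ae_of_all _ fun τ => (hB τ (u τ)).trans (Real.le_norm_self B))

lemma intervalIntegrable_comp_of_continuousOn (hmeas : ∀ v, StronglyMeasurable (φ · v))
    (hcont : ∀ t, Continuous (φ t)) (hB : ∀ t v, ‖φ t v‖ ≤ B) (hT : 0 ≤ T) {u : ℝ → E}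
    (hu : ContinuousOn u (Icc 0 T)) :
    IntervalIntegrable (fun τ => φ τ (u τ)) volume 0 T := by
  refine (intervalIntegrable_congr fun τ hτ => ?_).1 (intervalIntegrable_comp_of_norm_le hmeas
    hcont hB (Continuous.Icc_extend' (h := hT) hu.domRestrict) 0 T)
  rw [uIoc_of_le hT] at hτ
  simp only [IccExtend_of_mem _ _ (Ioc_subset_Icc_self hτ), domRestrict_apply]

end Integrability

section PicardOperator

variable {E : Type*} [NormedAddCommGroup E] [NormedSpace ℝ E] {φ : ℝ → E → E} {T : ℝ}

noncomputable def picardOp (hT : 0 ≤ T) (φ : ℝ → E → E) (y₀ : E) (u : ℝ → E) : ℝ → E :=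
  IccExtend hT fun t => y₀ + ∫ τ in (0 : ℝ)..t, φ τ (u τ)

lemma picardOp_of_mem (hT : 0 ≤ T) (y₀ : E) (u : ℝ → E) {t : ℝ} (ht : t ∈ Icc 0 T) :
    picardOp hT φ y₀ u t = y₀ + ∫ τ in (0 : ℝ)..t, φ τ (u τ) :=
  IccExtend_of_mem _ _ ht

lemma norm_picardOp_sub_le [SecondCountableTopology E] {L : ℝ≥0} {B : ℝ}
    (hmeas : ∀ v, StronglyMeasurable (φ · v)) (hlip : ∀ t, LipschitzWith L (φ t))
    (hB : ∀ t v, ‖φ t v‖ ≤ B) (hT : 0 ≤ T) (y₀ : E) {u v : ℝ → E} (hu : Continuous u)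
    (hv : Continuous v) {A : ℝ} {m : ℕ}
    (huv : ∀ τ ∈ Icc 0 T, ‖u τ - v τ‖ ≤ A * τ ^ m / m.factorial) (t : ℝ) :
    ‖picardOp hT φ y₀ u t - picardOp hT φ y₀ v t‖
      ≤ L * A * (projIcc 0 T hT t : ℝ) ^ (m + 1) / (m + 1).factorial := by
  have hcont t := (hlip t).continuous
  have hs := (projIcc 0 T hT t).2
  set s : ℝ := ↑(projIcc 0 T hT t)
  have hdiff : picardOp hT φ y₀ u t - picardOp hT φ y₀ v t
      = ∫ τ in (0 : ℝ)..s, (φ τ (u τ) - φ τ (v τ)) := by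
    rw [picardOp, picardOp, IccExtend, IccExtend, Function.comp_apply, Function.comp_apply,
      integral_sub (intervalIntegrable_comp_of_norm_le hmeas hcont hB hu _ _)
        (intervalIntegrable_comp_of_norm_le hmeas hcont hB hv _ _), add_sub_add_left_eq_sub]
  rw [hdiff]
  calc ‖∫ τ in (0 : ℝ)..s, (φ τ (u τ) - φ τ (v τ))‖
      ≤ ∫ τ in (0 : ℝ)..s, L * A / m.factorial * τ ^ m := by
        refine intervalIntegral.norm_integral_le_of_norm_le hs.1 (ae_of_all _ fun τ hτ => ?_)
          ((by fun_prop : Continuous fun τ : ℝ => L * A / m.factorial * τ ^ m).intervalIntegrable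
            _ _)
        calc ‖φ τ (u τ) - φ τ (v τ)‖ ≤ L * ‖u τ - v τ‖ := (hlip τ).norm_sub_le _ _
          _ ≤ L * (A * τ ^ m / m.factorial) :=
            mul_le_mul_of_nonneg_left (huv τ ⟨hτ.1.le, hτ.2.trans hs.2⟩) L.2
          _ = L * A / m.factorial * τ ^ m := by ring
    _ = L * A * s ^ (m + 1) / (m + 1).factorial := by
        rw [intervalIntegral.integral_const_mul, integral_pow, Nat.factorial_succ]
        push_cast
        field_simp
        ring

lemma dist_iterate_le_of_coe_eq_picardOp [SecondCountableTopology E] {L : ℝ≥0} {B : ℝ}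
    (hmeas : ∀ v, StronglyMeasurable (φ · v)) (hlip : ∀ t, LipschitzWith L (φ t))
    (hB : ∀ t v, ‖φ t v‖ ≤ B) (hT : 0 ≤ T) (y₀ : E) {Φ : (ℝ →ᵇ E) → (ℝ →ᵇ E)}
    (hΦ : ∀ u, ⇑(Φ u) = picardOp hT φ y₀ u) (k : ℕ) (u v : ℝ →ᵇ E) :
    dist (Φ^[k] u) (Φ^[k] v) ≤ (L * T) ^ k / k.factorial * dist u v := by
  have hpointwise : ∀ k t, ‖Φ^[k] u t - Φ^[k] v t‖
      ≤ L ^ k * dist u v * (projIcc 0 T hT t : ℝ) ^ k / k.factorial := by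
    intro k
    induction k with
    | zero => simpa [← dist_eq_norm] using BoundedContinuousFunction.dist_coe_le_dist
    | succ k ih =>
      intro t
      rw [Function.iterate_succ_apply', Function.iterate_succ_apply', hΦ, hΦ]
      refine (norm_picardOp_sub_le hmeas hlip hB hT y₀ (A := L ^ k * dist u v) (m := k)
        (Φ^[k] u).continuous (Φ^[k] v).continuous (fun τ hτ => ?_) t).trans_eq (by ring)
      simpa [projIcc_of_mem hT hτ] using ih τ
  refine (BoundedContinuousFunction.dist_le (by positivity)).2 fun t => ?_
  have hs := (projIcc 0 T hT t).2
  calc dist (Φ^[k] u t) (Φ^[k] v t)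
      ≤ L ^ k * dist u v * (projIcc 0 T hT t : ℝ) ^ k / k.factorial :=
        (dist_eq_norm _ _).trans_le (hpointwise k t)
    _ ≤ L ^ k * dist u v * T ^ k / k.factorial := by gcongr; exacts [hs.1, hs.2]
    _ = (L * T) ^ k / k.factorial * dist u v := by ring

theorem exists_integral_solution_norm_sub_le [CompleteSpace E] [SecondCountableTopology E]
    {L : ℝ≥0} {B : ℝ} (hmeas : ∀ v, StronglyMeasurable (φ · v))
    (hlip : ∀ t, LipschitzWith L (φ t)) (hB : ∀ t v, ‖φ t v‖ ≤ B) (hT : 0 ≤ T) (y₀ : E)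
    {x : ℝ → E} (hx : ContinuousOn x (Icc 0 T)) {D : ℝ}
    (hD : ∀ t ∈ Icc 0 T, ‖y₀ + (∫ τ in (0 : ℝ)..t, φ τ (x τ)) - x t‖ ≤ D) :
    ∃ y : ℝ → E, Continuous y ∧ (∀ t ∈ Icc 0 T, y t = y₀ + ∫ τ in (0 : ℝ)..t, φ τ (y τ)) ∧
      ∀ t ∈ Icc 0 T, ‖y t - x t‖ ≤ 2 * Real.exp (L * T) * D := by
  have hcont t := (hlip t).continuous
  let extend (w : C(Icc 0 T, E)) : ℝ →ᵇ E :=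
    (BoundedContinuousFunction.mkOfCompact w).compContinuous ⟨projIcc 0 T hT, continuous_projIcc⟩
  let Φ (u : ℝ →ᵇ E) : ℝ →ᵇ E := extend ⟨fun t => y₀ + ∫ τ in (0 : ℝ)..t, φ τ (u τ),
    ((continuous_primitive (intervalIntegrable_comp_of_norm_le hmeas hcont hB u.continuous) 0).comp
      continuous_subtype_val).const_add y₀⟩
  let xExt := extend ⟨(Icc 0 T).domRestrict x, hx.domRestrict⟩
  have hxExt : ∀ t ∈ Icc 0 T, xExt t = x t := fun t ht => by
    simp [xExt, extend, projIcc_of_mem hT ht]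
  obtain ⟨y, hyfix, hyxExt⟩ := exists_isFixedPt_dist_le_of_dist_iterate_le (by positivity)
    (dist_iterate_le_of_coe_eq_picardOp hmeas hlip hB hT y₀ (Φ := Φ) fun _ => rfl) xExt
  have hdefect : dist xExt (Φ xExt) ≤ D := by
    refine (BoundedContinuousFunction.dist_le ((norm_nonneg _).trans (hD 0 ⟨le_rfl, hT⟩))).2
      fun t => ?_
    have hs := (projIcc 0 T hT t).2
    have hΦxExt : Φ xExt t = y₀ + ∫ τ in (0 : ℝ)..(projIcc 0 T hT t : ℝ), φ τ (x τ) := by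
      refine congrArg (y₀ + ·) (integral_congr fun τ hτ => ?_)
      change τ ∈ uIcc 0 (projIcc 0 T hT t : ℝ) at hτ
      rw [uIcc_of_le hs.1] at hτ
      exact congrArg (φ τ) (hxExt τ ⟨hτ.1, hτ.2.trans hs.2⟩)
    rw [dist_comm, dist_eq_norm, hΦxExt, show xExt t = x (projIcc 0 T hT t) from rfl]
    exact hD _ hs
  refine ⟨y, y.continuous, fun t ht => ?_, fun t ht => ?_⟩
  · exact (DFunLike.congr_fun hyfix t).symm.trans (picardOp_of_mem hT y₀ y ht)
  · calc ‖y t - x t‖ = dist (xExt t) (y t) := by rw [hxExt t ht, dist_comm, dist_eq_norm]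
      _ ≤ dist xExt y := BoundedContinuousFunction.dist_coe_le_dist t
      _ ≤ 2 * Real.exp (L * T) * dist xExt (Φ xExt) := hyxExt
      _ ≤ 2 * Real.exp (L * T) * D := by gcongr

end PicardOperator

lemma integral_norm_le_mul_of_norm_le {E : Type*} [NormedAddCommGroup E] {f : ℝ → E}
    {a b η : ℝ} (hab : a ≤ b) (h : ∀ t ∈ Ioc a b, ‖f t‖ ≤ η) :
    ∫ t in a..b, ‖f t‖ ≤ η * (b - a) :=
  (Real.le_norm_self _).trans <| (norm_integral_le_of_norm_le_const fun t ht =>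
    (norm_norm _).trans_le (h t (uIoc_of_le hab ▸ ht))).trans_eq
      (by rw [abs_of_nonneg (sub_nonneg.2 hab)])

section TruncatedField

variable {E : Type*} [NormedAddCommGroup E] [NormedSpace ℝ E] {φ : ℝ → E → E} {T r : ℝ}

noncomputable def truncatedField (T r : ℝ) (φ : ℝ → E → E) (t : ℝ) (v : E) : E :=
  if t ∈ Icc 0 T then φ t (radialRetraction r v) else 0

lemma truncatedField_of_mem {t : ℝ} (ht : t ∈ Icc 0 T) {v : E} (hv : ‖v‖ ≤ r) :
    truncatedField T r φ t v = φ t v := by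
  rw [truncatedField, if_pos ht, radialRetraction_of_norm_le hv]

lemma stronglyMeasurable_truncatedField (hmeas : ∀ v, StronglyMeasurable (φ · v)) (v : E) :
    StronglyMeasurable (truncatedField T r φ · v) :=
  StronglyMeasurable.ite measurableSet_Icc (hmeas _) stronglyMeasurable_const

lemma lipschitzWith_truncatedField {L : ℝ≥0} (hr : 0 ≤ r)
    (hlip : ∀ t ∈ Icc 0 T, LipschitzOnWith L (φ t) (Metric.closedBall 0 r)) (t : ℝ) :
    LipschitzWith (L * 2) (truncatedField T r φ t) := by
  by_cases ht : t ∈ Icc 0 T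
  · rw [show truncatedField T r φ t = φ t ∘ radialRetraction r from funext fun _ => if_pos ht]
    exact lipschitzOnWith_univ.1 ((hlip t ht).comp
      (lipschitzWith_radialRetraction hr).lipschitzOnWith
      fun v _ => radialRetraction_mem_closedBall hr v)
  · rw [show truncatedField T r φ t = fun _ => 0 from funext fun _ => if_neg ht]
    exact (LipschitzWith.const 0).weaken zero_le

lemma norm_truncatedField_le {L : ℝ≥0} {C : ℝ} (hT : 0 ≤ T) (hr : 0 ≤ r)
    (hlip : ∀ t ∈ Icc 0 T, LipschitzOnWith L (φ t) (Metric.closedBall 0 r))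
    (h0 : ∀ t ∈ Icc 0 T, ‖φ t 0‖ ≤ C) (t : ℝ) (v : E) :
    ‖truncatedField T r φ t v‖ ≤ L * r + C := by
  by_cases ht : t ∈ Icc 0 T
  · have hv := radialRetraction_mem_closedBall hr v
    rw [truncatedField, if_pos ht]
    calc ‖φ t (radialRetraction r v)‖
        ≤ ‖φ t (radialRetraction r v) - φ t 0‖ + ‖φ t 0‖ := norm_le_norm_sub_add _ _
      _ ≤ L * ‖radialRetraction r v - 0‖ + C :=
        add_le_add ((hlip t ht).norm_sub_le hv (Metric.mem_closedBall_self hr)) (h0 t ht)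
      _ ≤ L * r + C := by
        rw [sub_zero]
        gcongr
        exact mem_closedBall_zero_iff.1 hv
  · rw [truncatedField, if_neg ht, norm_zero]
    have := (norm_nonneg _).trans (h0 0 ⟨le_rfl, hT⟩)
    positivity

end TruncatedField

section CaratheodorySolution

variable {K : ℕ} {T : ℝ} {φ ψ : ℝ → EuclideanSpace ℝ (Fin K) → EuclideanSpace ℝ (Fin K)}
  {z y₀ : EuclideanSpace ℝ (Fin K)} {x : ℝ → EuclideanSpace ℝ (Fin K)}

lemma norm_defect_le_of_isCaraSol (hx : IsCaraSol K T ψ z x)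
    (hφ : IntervalIntegrable (fun τ => φ τ (x τ)) volume 0 T) (y₀ : EuclideanSpace ℝ (Fin K))
    {t : ℝ} (ht : t ∈ Icc 0 T) :
    ‖y₀ + (∫ τ in (0 : ℝ)..t, φ τ (x τ)) - x t‖
      ≤ ‖y₀ - z‖ + ∫ τ in (0 : ℝ)..T, ‖φ τ (x τ) - ψ τ (x τ)‖ := by
  obtain ⟨-, -, hψ, hxeq⟩ := hx
  have hsub : uIcc 0 t ⊆ uIcc 0 T := uIcc_subset_uIcc_left (Icc_subset_uIcc ht)
  calc ‖y₀ + (∫ τ in (0 : ℝ)..t, φ τ (x τ)) - x t‖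
      = ‖(y₀ - z) + ∫ τ in (0 : ℝ)..t, (φ τ (x τ) - ψ τ (x τ))‖ := by
        rw [hxeq t ht, integral_sub (hφ.mono_set hsub) (hψ.mono_set hsub)]
        abel_nf
    _ ≤ ‖y₀ - z‖ + ∫ τ in (0 : ℝ)..t, ‖φ τ (x τ) - ψ τ (x τ)‖ :=
        (norm_add_le _ _).trans (add_le_add le_rfl (norm_integral_le_integral_norm ht.1))
    _ ≤ ‖y₀ - z‖ + ∫ τ in (0 : ℝ)..T, ‖φ τ (x τ) - ψ τ (x τ)‖ :=
        add_le_add le_rfl (integral_mono_interval le_rfl ht.1 ht.2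
          (ae_of_all _ fun _ => norm_nonneg _) (hφ.sub hψ).norm)

theorem exists_isCaraSol_norm_sub_le_of_perturbation (hT : 0 ≤ T) (hx : IsCaraSol K T ψ z x)
    {M : ℝ} (hM : ∀ t ∈ Icc 0 T, ‖x t‖ ≤ M) {L : ℝ≥0} {C₀ : ℝ} (hmeas : ∀ v, Measurable (φ · v))
    (hlip : ∀ t ∈ Icc 0 T, LipschitzOnWith L (φ t) (Metric.closedBall 0 (M + 1)))
    (h0 : ∀ t ∈ Icc 0 T, ‖φ t 0‖ ≤ C₀)
    (hsmall : 2 * Real.exp (2 * L * T) *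
      (‖y₀ - z‖ + ∫ τ in (0 : ℝ)..T, ‖φ τ (x τ) - ψ τ (x τ)‖) ≤ 1) :
    ∃ y, IsCaraSol K T φ y₀ y ∧ ∀ t ∈ Icc 0 T, ‖y t - x t‖ ≤ 2 * Real.exp (2 * L * T) *
      (‖y₀ - z‖ + ∫ τ in (0 : ℝ)..T, ‖φ τ (x τ) - ψ τ (x τ)‖) := by
  have hr : 0 ≤ M + 1 := by linarith [(norm_nonneg _).trans (hM 0 ⟨le_rfl, hT⟩)]
  set φ' := truncatedField T (M + 1) φ
  have hmeas' := stronglyMeasurable_truncatedField (T := T) (r := M + 1) fun v =>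
    (hmeas v).stronglyMeasurable
  have hlip' := lipschitzWith_truncatedField hr hlip
  have hB := norm_truncatedField_le hT hr hlip h0
  have hcont' t := (hlip' t).continuous
  have hagree {u : ℝ → EuclideanSpace ℝ (Fin K)} (hu : ∀ t ∈ Icc 0 T, ‖u t‖ ≤ M + 1) :
      EqOn (fun τ => φ' τ (u τ)) (fun τ => φ τ (u τ)) (Icc 0 T) :=
    fun τ hτ => truncatedField_of_mem hτ (hu τ hτ)
  have hxagree := hagree fun t ht => (hM t ht).trans (by linarith)
  obtain ⟨y, hyc, hyeq, hyx⟩ := exists_integral_solution_norm_sub_le hmeas' hlip' hB hT y₀ hx.1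
    fun t ht => (norm_defect_le_of_isCaraSol hx (intervalIntegrable_comp_of_continuousOn hmeas'
      hcont' hB hT hx.1) y₀ ht).trans_eq <| congrArg (‖y₀ - z‖ + ·) <| integral_congr
        fun τ hτ => congrArg (‖· - ψ τ (x τ)‖) (hxagree ((uIcc_of_le hT).le hτ))
  push_cast at hyx
  rw [mul_comm (L : ℝ) 2] at hyx
  have hyr : ∀ t ∈ Icc 0 T, ‖y t‖ ≤ M + 1 := fun t ht =>
    calc ‖y t‖ ≤ ‖x t‖ + ‖y t - x t‖ := norm_le_norm_add_norm_sub' _ _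
      _ ≤ M + 1 := add_le_add (hM t ht) ((hyx t ht).trans hsmall)
  have hyagree := hagree hyr
  refine ⟨y, ⟨hyc.continuousOn, ?_, ?_, fun t ht => ?_⟩, hyx⟩
  · simpa using hyeq 0 ⟨le_rfl, hT⟩
  · refine (intervalIntegrable_congr (hyagree.mono ?_)).1
      (intervalIntegrable_comp_of_norm_le hmeas' hcont' hB hyc 0 T)
    rw [uIoc_of_le hT]
    exact Ioc_subset_Icc_self
  · rw [hyeq t ht, integral_congr (hyagree.mono ?_)]
    rw [uIcc_of_le ht.1]
    exact Icc_subset_Icc_right ht.2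

end CaratheodorySolution

theorem perturbed_ode_existence_and_error_bound_general
    (K : ℕ) (T : ℝ) (hT : 0 < T)
    (f : ℝ → EuclideanSpace ℝ (Fin K) → EuclideanSpace ℝ (Fin K))
    (g : ℝ → ℝ → EuclideanSpace ℝ (Fin K) → EuclideanSpace ℝ (Fin K))
    (z : EuclideanSpace ℝ (Fin K)) (zε : ℝ → EuclideanSpace ℝ (Fin K))
    -- (A1)
    (hA1 : ∃ C1 : ℝ, ∀ ε ∈ Set.Ioc (0:ℝ) 1, ∀ t ∈ Set.Icc (0:ℝ) T,
      ‖f t 0‖ + ‖g ε t 0‖ ≤ C1)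
    -- (A2)
    (hA2 : (∀ x, Measurable fun t => f t x) ∧
      (∀ ε ∈ Set.Ioc (0:ℝ) 1, ∀ x, Measurable fun t => f t x + g ε t x))
    -- (A3)
    (hA3 : ∀ r > (0:ℝ), ∃ L : ℝ,
      (∀ t ∈ Set.Icc (0:ℝ) T, ∀ x ∈ Metric.ball (0 : EuclideanSpace ℝ (Fin K)) r,
        ∀ y ∈ Metric.ball (0 : EuclideanSpace ℝ (Fin K)) r,
          ‖f t x - f t y‖ ≤ L * ‖x - y‖) ∧
      (∀ ε ∈ Set.Ioc (0:ℝ) 1, ∀ t ∈ Set.Icc (0:ℝ) T,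
        ∀ x ∈ Metric.ball (0 : EuclideanSpace ℝ (Fin K)) r,
        ∀ y ∈ Metric.ball (0 : EuclideanSpace ℝ (Fin K)) r,
          ‖(f t x + g ε t x) - (f t y + g ε t y)‖ ≤ L * ‖x - y‖))
    -- (A4)
    (hA4 : (∀ δ > (0:ℝ), ∃ ε₀ > (0:ℝ), ∀ ε ∈ Set.Ioc (0:ℝ) 1, ε ≤ ε₀ →
        ‖zε ε - z‖ ≤ δ) ∧
      (∀ r > (0:ℝ), ∀ δ > (0:ℝ), ∃ ε₀ > (0:ℝ), ∀ ε ∈ Set.Ioc (0:ℝ) 1, ε ≤ ε₀ →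
        ∀ t ∈ Set.Icc (0:ℝ) T, ∀ y ∈ Metric.ball (0 : EuclideanSpace ℝ (Fin K)) r,
          ‖g ε t y‖ ≤ δ))
    (x : ℝ → EuclideanSpace ℝ (Fin K))
    (hx : IsCaraSol K T f z x) :
    ∃ εbar ∈ Set.Ioc (0:ℝ) 1, ∃ C : ℝ,
      ∀ ε ∈ Set.Ioc (0:ℝ) 1, ε ≤ εbar →
        ∃ y : ℝ → EuclideanSpace ℝ (Fin K),
          IsCaraSol K T (fun t v => f t v + g ε t v) (zε ε) y ∧
          ∀ t ∈ Set.Icc (0:ℝ) T,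
            ‖y t - x t‖ ≤ C * (‖zε ε - z‖ + ∫ τ in (0:ℝ)..T, ‖g ε τ (x τ)‖) := by
  obtain ⟨C₁, hC₁⟩ := hA1
  obtain ⟨M, hM⟩ := isCompact_Icc.exists_bound_of_continuousOn hx.1
  have hM₀ : 0 ≤ M := (norm_nonneg _).trans (hM 0 ⟨le_rfl, hT.le⟩)
  obtain ⟨L, -, hL⟩ := hA3 (M + 2) (by linarith)
  have hlip (ε) (hε : ε ∈ Ioc (0 : ℝ) 1) (t) (ht : t ∈ Icc 0 T) :
      LipschitzOnWith L.toNNReal (fun v => f t v + g ε t v) (Metric.closedBall 0 (M + 1)) :=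
    LipschitzOnWith.of_dist_le' fun u hu v hv => by
      simpa only [dist_eq_norm] using hL ε hε t ht u
        (Metric.closedBall_subset_ball (by linarith) hu) v
        (Metric.closedBall_subset_ball (by linarith) hv)
  set C := 2 * Real.exp (2 * L.toNNReal * T)
  have hC : 0 < C := by positivity
  obtain ⟨ε₁, hε₁, hz⟩ := hA4.1 (1 / (2 * C)) (by positivity)
  obtain ⟨ε₂, hε₂, hg⟩ := hA4.2 (M + 2) (by linarith) (1 / (2 * C * T)) (by positivity)
  refine ⟨min 1 (min ε₁ ε₂), ⟨by positivity, min_le_left _ _⟩, C, fun ε hε hεle => ?_⟩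
  simp only [le_min_iff] at hεle
  have hδ : ∫ τ in (0:ℝ)..T, ‖g ε τ (x τ)‖ ≤ 1 / (2 * C * T) * (T - 0) :=
    integral_norm_le_mul_of_norm_le hT.le fun τ hτ => hg ε hε hεle.2.2 τ (Ioc_subset_Icc_self hτ)
      _ (mem_ball_zero_iff.2 (by linarith [hM τ (Ioc_subset_Icc_self hτ)]))
  have hsmall : C * (‖zε ε - z‖ + ∫ τ in (0:ℝ)..T, ‖g ε τ (x τ)‖) ≤ 1 :=
    calc _ ≤ C * (1 / (2 * C) + 1 / (2 * C * T) * (T - 0)) := by gcongr; exact hz ε hε hεle.2.1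
      _ = 1 := by field_simp; ring
  simpa only [add_sub_cancel_left] using exists_isCaraSol_norm_sub_le_of_perturbation
    (y₀ := zε ε) hT.le hx hM (hA2.2 ε hε) (hlip ε hε)
    (fun t ht => (norm_add_le _ _).trans (hC₁ ε hε t ht))
    (by simpa only [add_sub_cancel_left] using hsmall)

/-- Under (A1)–(A4), if `ẋ = f(t,x), x(0) = z` has a solution `x` on
`[0,T]`, then there are `ε̄ ∈ (0,1]` and a constant `C` such that for all `0 < ε ≤ ε̄`
the perturbed problem `ẏ = f(t,y) + g(ε,t,y), y(0) = z_ε` has a solution `y^ε` on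
`[0,T]` with `sup_{[0,T]} ‖y^ε − x‖ ≤ C (‖z_ε − z‖ + δ_ε)`,
where `δ_ε = ∫_0^T ‖g(ε,τ,x(τ))‖ dτ`. -/
theorem perturbed_ode_existence_and_error_bound
    (K : ℕ) (hK : 1 ≤ K) (T : ℝ) (hT : 0 < T)
    (f : ℝ → EuclideanSpace ℝ (Fin K) → EuclideanSpace ℝ (Fin K))
    (g : ℝ → ℝ → EuclideanSpace ℝ (Fin K) → EuclideanSpace ℝ (Fin K))
    (z : EuclideanSpace ℝ (Fin K)) (zε : ℝ → EuclideanSpace ℝ (Fin K))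
    -- (A1)
    (hA1 : ∃ C1 : ℝ, ∀ ε ∈ Set.Ioc (0:ℝ) 1, ∀ t ∈ Set.Icc (0:ℝ) T,
      ‖f t 0‖ + ‖g ε t 0‖ ≤ C1)
    -- (A2)
    (hA2 : (∀ x, Measurable fun t => f t x) ∧
      (∀ ε ∈ Set.Ioc (0:ℝ) 1, ∀ x, Measurable fun t => f t x + g ε t x))
    -- (A3)
    (hA3 : ∀ r > (0:ℝ), ∃ L : ℝ,
      (∀ t ∈ Set.Icc (0:ℝ) T, ∀ x ∈ Metric.ball (0 : EuclideanSpace ℝ (Fin K)) r,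
        ∀ y ∈ Metric.ball (0 : EuclideanSpace ℝ (Fin K)) r,
          ‖f t x - f t y‖ ≤ L * ‖x - y‖) ∧
      (∀ ε ∈ Set.Ioc (0:ℝ) 1, ∀ t ∈ Set.Icc (0:ℝ) T,
        ∀ x ∈ Metric.ball (0 : EuclideanSpace ℝ (Fin K)) r,
        ∀ y ∈ Metric.ball (0 : EuclideanSpace ℝ (Fin K)) r,
          ‖(f t x + g ε t x) - (f t y + g ε t y)‖ ≤ L * ‖x - y‖))
    -- (A4)
    (hA4 : (∀ δ > (0:ℝ), ∃ ε₀ > (0:ℝ), ∀ ε ∈ Set.Ioc (0:ℝ) 1, ε ≤ ε₀ →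
        ‖zε ε - z‖ ≤ δ) ∧
      (∀ r > (0:ℝ), ∀ δ > (0:ℝ), ∃ ε₀ > (0:ℝ), ∀ ε ∈ Set.Ioc (0:ℝ) 1, ε ≤ ε₀ →
        ∀ t ∈ Set.Icc (0:ℝ) T, ∀ y ∈ Metric.ball (0 : EuclideanSpace ℝ (Fin K)) r,
          ‖g ε t y‖ ≤ δ))
    (x : ℝ → EuclideanSpace ℝ (Fin K))
    (hx : IsCaraSol K T f z x) :
    ∃ εbar ∈ Set.Ioc (0:ℝ) 1, ∃ C : ℝ,
      ∀ ε ∈ Set.Ioc (0:ℝ) 1, ε ≤ εbar →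
        ∃ y : ℝ → EuclideanSpace ℝ (Fin K),
          IsCaraSol K T (fun t v => f t v + g ε t v) (zε ε) y ∧
          ∀ t ∈ Set.Icc (0:ℝ) T,
            ‖y t - x t‖ ≤ C * (‖zε ε - z‖ + ∫ τ in (0:ℝ)..T, ‖g ε τ (x τ)‖) :=
  perturbed_ode_existence_and_error_bound_general K T hT f g z zε hA1 hA2 hA3 hA4 x hx
end

section
/- Under assumptions (A1)–(A4): suppose there exists a sequence ε_i ∈ (0,1] with lim_{i→∞} ε_i = 0 such that for each i the initial value problem ẏ = f(t,y) + g(ε_i,t,y), y(0) = z_{ε_i} has a (Carathéodory) solution y^{ε_i} on [0, T] satisfying sup_{i≥1, 0≤t≤T} |y^{ε_i}(t)| ≤ C_2 for some constant C_2. Then the initial value problem ẋ = f(t,x), x(0) = z has a solution on [0, T]. -/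
/-! The perturbed solutions stay in the closed ball of radius `C2`, on which all the vector fields
`f + g(ε_i)` and `f` are Lipschitz with one constant `L`. Grönwall's inequality bounds
`|y^{ε_i}(t) - y^{ε_j}(t)|` by `(|z_{ε_i} - z_{ε_j}| + T sup |g(ε_i) - g(ε_j)|) e^{LT}`, so the
solutions form a uniform Cauchy sequence on `[0, T]`. Along this sequence the integrands
`f(t, y^{ε_i}(t)) + g(ε_i, t, y^{ε_i}(t))` converge uniformly to `f(t, x(t))`, where `x` is the
uniform limit; this makes `t ↦ f(t, x(t))` integrable as a uniform limit of integrable functions and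
lets the integral equations pass to the limit. -/

open Set MeasureTheory intervalIntegral

open Filter Topology Real
open scoped NNReal Interval

section UniformLimits

variable {ι E : Type*} [NormedAddCommGroup E] {l : Filter ι}
  {F : ι → ℝ → E} {f : ℝ → E} {a b : ℝ} {μ : Measure ℝ} [IsLocallyFiniteMeasure μ]

theorem TendstoUniformlyOn.intervalIntegrable [l.NeBot] [l.IsCountablyGenerated]
    (hF : ∀ i, IntervalIntegrable (F i) μ a b) (h : TendstoUniformlyOn F f l (Ι a b)) :
    IntervalIntegrable f μ a b := by
  obtain ⟨i, hi⟩ := (Metric.tendstoUniformlyOn_iff.1 h 1 one_pos).exists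
  have hbound : IntervalIntegrable (fun x => ‖F i x‖ + 1) μ a b :=
    (hF i).norm.add intervalIntegrable_const
  simp only [intervalIntegrable_iff] at hF hbound ⊢
  refine hbound.mono' (aestronglyMeasurable_of_tendsto_ae l (fun i => (hF i).aestronglyMeasurable)
    ((ae_restrict_iff' measurableSet_uIoc).2 (ae_of_all _ fun x hx => h.tendsto_at hx)))
    ((ae_restrict_iff' measurableSet_uIoc).2 (ae_of_all _ fun x hx => ?_))
  exact norm_le_norm_add_const_of_dist_le (hi x hx).le

theorem TendstoUniformlyOn.tendsto_intervalIntegral [NormedSpace ℝ E] [l.NeBot]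
    [l.IsCountablyGenerated] (hF : ∀ i, IntervalIntegrable (F i) μ a b)
    (h : TendstoUniformlyOn F f l (Ι a b)) :
    Tendsto (fun i => ∫ x in a..b, F i x ∂μ) l (𝓝 (∫ x in a..b, f x ∂μ)) :=
  tendsto_integral_filter_of_dominated_convergence (fun x => ‖f x‖ + 1)
    (Eventually.of_forall fun i => (hF i).def'.aestronglyMeasurable)
    ((Metric.tendstoUniformlyOn_iff.1 h 1 one_pos).mono fun _ hi => ae_of_all _ fun x hx =>
      norm_le_norm_add_const_of_dist_le (dist_comm (f x) _ ▸ (hi x hx).le))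
    ((h.intervalIntegrable hF).norm.add intervalIntegrable_const)
    (ae_of_all _ fun _ hx => h.tendsto_at hx)

end UniformLimits

theorem UniformCauchySeqOn.exists_tendstoUniformlyOn {α β : Type*} [UniformSpace β]
    [CompleteSpace β] {F : ℕ → α → β} {s : Set α} (hF : UniformCauchySeqOn F atTop s) :
    ∃ f : α → β, TendstoUniformlyOn F f atTop s :=
  ⟨fun x => haveI : Nonempty β := ⟨F 0 x⟩; limUnder atTop fun i => F i x,
    hF.tendstoUniformlyOn_of_tendsto fun _ hx => (hF.cauchySeq hx).tendsto_limUnder⟩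

theorem TendstoUniformlyOn.apply_of_lipschitzOnWith {ι α β γ : Type*} [PseudoMetricSpace β]
    [PseudoMetricSpace γ] {l : Filter ι} {φ : ι → α → β → γ} {f : α → β → γ} {y : ι → α → β}
    {x : α → β} {s : Set α} {S : Set β} {L : ℝ≥0}
    (hφ : TendstoUniformlyOn (fun i (p : α × β) => φ i p.1 p.2) (fun p => f p.1 p.2) l (s ×ˢ S))
    (hy : TendstoUniformlyOn y x l s) (hyS : ∀ i, ∀ t ∈ s, y i t ∈ S) (hxS : ∀ t ∈ s, x t ∈ S)
    (hf : ∀ t ∈ s, LipschitzOnWith L (f t) S) :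
    TendstoUniformlyOn (fun i t => φ i t (y i t)) (fun t => f t (x t)) l s := by
  rw [Metric.tendstoUniformlyOn_iff] at hφ hy ⊢
  intro ε hε
  filter_upwards [hφ (ε / 2) (half_pos hε), hy (ε / (2 * (L + 1))) (by positivity)]
    with i hφi hyi t ht
  have hLip : dist (f t (x t)) (f t (y i t)) < ε / 2 :=
    calc dist (f t (x t)) (f t (y i t)) ≤ L * dist (x t) (y i t) :=
          (hf t ht).dist_le_mul _ (hxS t ht) _ (hyS i t ht)
      _ ≤ (L + 1) * dist (x t) (y i t) := by gcongr; linarith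
      _ < (L + 1) * (ε / (2 * (L + 1))) := by gcongr; exact hyi t ht
      _ = ε / 2 := by field_simp
  calc dist (f t (x t)) (φ i t (y i t))
      ≤ dist (f t (x t)) (f t (y i t)) + dist (f t (y i t)) (φ i t (y i t)) :=
        dist_triangle _ _ _
    _ < ε / 2 + ε / 2 := add_lt_add hLip (hφi (t, y i t) ⟨ht, hyS i t ht⟩)
    _ = ε := add_halves ε

theorem LipschitzOnWith.of_norm_sub_le' {E F : Type*} [SeminormedAddCommGroup E]
    [SeminormedAddCommGroup F] {f : E → F} {s : Set E} {L : ℝ}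
    (h : ∀ x ∈ s, ∀ y ∈ s, ‖f x - f y‖ ≤ L * ‖x - y‖) : LipschitzOnWith L.toNNReal f s :=
  LipschitzOnWith.of_dist_le' (by simpa only [dist_eq_norm] using h)

theorem Filter.Tendsto.eventually_of_forall_le {ε : ℕ → ℝ} {P : ℝ → Prop}
    (hε : Tendsto ε atTop (𝓝 0)) (hmem : ∀ i, ε i ∈ Ioc 0 1)
    (hP : ∃ ε₀ > 0, ∀ e ∈ Ioc (0:ℝ) 1, e ≤ ε₀ → P e) : ∀ᶠ i in atTop, P (ε i) := by
  obtain ⟨ε₀, hε₀, h⟩ := hP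
  filter_upwards [hε.eventually_lt_const hε₀] with i hi using h _ (hmem i) hi.le

theorem le_mul_exp_of_le_add_mul_integral {u : ℝ → ℝ} {a L T : ℝ} (hL : 0 ≤ L)
    (hu : ContinuousOn u (Icc 0 T))
    (h : ∀ t ∈ Icc 0 T, u t ≤ a + L * ∫ τ in (0:ℝ)..t, u τ) :
    ∀ t ∈ Icc 0 T, u t ≤ a * exp (L * t) := by
  -- `F' = u ≤ L * F + a`, so the differential form of Grönwall's inequality bounds `F`.
  set F : ℝ → ℝ := fun s => ∫ τ in (0:ℝ)..s, u τ
  have hF : ∀ s ∈ Icc 0 T, HasDerivWithinAt F (u s) (Icc 0 T) s := fun s hs => by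
    have : Fact (s ∈ Icc 0 T) := ⟨hs⟩
    exact integral_hasDerivWithinAt_right
      (hu.mono (uIcc_subset_Icc ⟨le_rfl, hs.1.trans hs.2⟩ hs)).intervalIntegrable
      (hu.stronglyMeasurableAtFilter_nhdsWithin measurableSet_Icc s) (hu s hs)
  have hF_right : ∀ s ∈ Ico 0 T, HasDerivWithinAt F (u s) (Ici s) s := fun s hs =>
    (hasDerivWithinAt_inter' (Icc_mem_nhdsGE_of_mem hs)).1
      ((hF s (Ico_subset_Icc_self hs)).mono inter_subset_right)
  intro t ht
  have hFt : F t ≤ gronwallBound 0 L a t := by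
    simpa only [sub_zero] using le_gronwallBound_of_liminf_deriv_right_le
      (fun s hs => (hF s hs).continuousWithinAt)
      (fun s hs _ hr => (hF_right s hs).liminf_right_slope_le hr) (by simp [F])
      (fun s hs => by linarith [h s (Ico_subset_Icc_self hs)]) t ht
  calc u t ≤ a + L * gronwallBound 0 L a t := (h t ht).trans (by gcongr)
    _ = a * exp (L * t) := by
      rcases hL.eq_or_lt with rfl | hL
      · simp [gronwallBound_K0]
      · rw [gronwallBound_of_K_ne_0 hL.ne']; field_simp; ring

section CaratheodorySolutions

variable {K : ℕ} {T : ℝ} {S : Set (EuclideanSpace ℝ (Fin K))}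

theorem IsCaraSol.dist_le {φ ψ : ℝ → EuclideanSpace ℝ (Fin K) → EuclideanSpace ℝ (Fin K)}
    {a b : EuclideanSpace ℝ (Fin K)} {y₁ y₂ : ℝ → EuclideanSpace ℝ (Fin K)} {L : ℝ≥0} {δ : ℝ} (h₁ : IsCaraSol K T φ a y₁) (h₂ : IsCaraSol K T ψ b y₂)
    (hy₁ : ∀ t ∈ Icc 0 T, y₁ t ∈ S) (hy₂ : ∀ t ∈ Icc 0 T, y₂ t ∈ S)
    (hφ : ∀ t ∈ Icc 0 T, LipschitzOnWith L (φ t) S)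
    (hφψ : ∀ t ∈ Icc 0 T, ∀ v ∈ S, dist (φ t v) (ψ t v) ≤ δ) :
    ∀ t ∈ Icc 0 T, dist (y₁ t) (y₂ t) ≤ (dist a b + δ * T) * exp (L * T) := by
  obtain ⟨hc₁, -, hi₁, he₁⟩ := h₁
  obtain ⟨hc₂, -, hi₂, he₂⟩ := h₂
  intro t ht
  have hT : 0 ≤ T := ht.1.trans ht.2
  have hδ : 0 ≤ δ := dist_nonneg.trans (hφψ t ht _ (hy₂ t ht))
  have hpt : ∀ τ ∈ Icc 0 T, ‖φ τ (y₁ τ) - ψ τ (y₂ τ)‖ ≤ L * dist (y₁ τ) (y₂ τ) + δ :=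
    fun τ hτ => by
      rw [← dist_eq_norm]
      exact (dist_triangle _ (φ τ (y₂ τ)) _).trans (add_le_add
        ((hφ τ hτ).dist_le_mul _ (hy₁ τ hτ) _ (hy₂ τ hτ)) (hφψ τ hτ _ (hy₂ τ hτ)))
  have hu : ContinuousOn (fun τ => dist (y₁ τ) (y₂ τ)) (Icc 0 T) := by fun_prop
  have hint : ∀ s ∈ Icc 0 T, dist (y₁ s) (y₂ s) ≤
      (dist a b + δ * T) + L * ∫ τ in (0:ℝ)..s, dist (y₁ τ) (y₂ τ) := by
    intro s hs
    have hsub : uIcc 0 s ⊆ uIcc 0 T := uIcc_subset_uIcc_left (by rwa [uIcc_of_le hT])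
    have hu_int : IntervalIntegrable (fun τ => dist (y₁ τ) (y₂ τ)) volume 0 s :=
      (hu.mono (uIcc_of_le hT ▸ hsub)).intervalIntegrable
    calc dist (y₁ s) (y₂ s)
        = ‖(a - b) + ∫ τ in (0:ℝ)..s, (φ τ (y₁ τ) - ψ τ (y₂ τ))‖ := by
          rw [integral_sub (hi₁.mono_set hsub) (hi₂.mono_set hsub), dist_eq_norm,
            he₁ s hs, he₂ s hs]
          congr 1; abel
      _ ≤ dist a b + ∫ τ in (0:ℝ)..s, (L * dist (y₁ τ) (y₂ τ) + δ) :=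
          norm_add_le_of_le (dist_eq_norm a b).ge
            (norm_integral_le_of_norm_le hs.1
              (ae_of_all _ fun τ hτ => hpt τ (uIcc_of_le hT ▸ hsub (Ioc_subset_Icc_self.trans
                (Icc_subset_uIcc) hτ)))
              ((hu_int.const_mul _).add intervalIntegrable_const))
      _ = dist a b + δ * s + L * ∫ τ in (0:ℝ)..s, dist (y₁ τ) (y₂ τ) := by
          rw [integral_add (hu_int.const_mul _) intervalIntegrable_const,
            intervalIntegral.integral_const_mul, intervalIntegral.integral_const, sub_zero,
            smul_eq_mul]
          ring
      _ ≤ (dist a b + δ * T) + L * ∫ τ in (0:ℝ)..s, dist (y₁ τ) (y₂ τ) := by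
          gcongr; exact hs.2
  calc dist (y₁ t) (y₂ t) ≤ (dist a b + δ * T) * exp (L * t) :=
        le_mul_exp_of_le_add_mul_integral L.2 hu hint t ht
    _ ≤ (dist a b + δ * T) * exp (L * T) := by gcongr; exact ht.2

theorem uniformCauchySeqOn_of_isCaraSol
    {φ : ℕ → ℝ → EuclideanSpace ℝ (Fin K) → EuclideanSpace ℝ (Fin K)}
    {a : ℕ → EuclideanSpace ℝ (Fin K)} {y : ℕ → ℝ → EuclideanSpace ℝ (Fin K)} {L : ℝ≥0}
    (hy : ∀ i, IsCaraSol K T (φ i) (a i) (y i)) (hyS : ∀ i, ∀ t ∈ Icc 0 T, y i t ∈ S)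
    (hφ : ∀ i, ∀ t ∈ Icc 0 T, LipschitzOnWith L (φ i t) S) (ha : CauchySeq a)
    (hφS : UniformCauchySeqOn (fun i (p : ℝ × EuclideanSpace ℝ (Fin K)) => φ i p.1 p.2) atTop
      (Icc 0 T ×ˢ S)) :
    UniformCauchySeqOn y atTop (Icc 0 T) := by
  rw [Metric.uniformCauchySeqOn_iff] at hφS ⊢
  intro ε hε
  set M := (1 + |T|) * exp (L * T) with hM_def
  have hM : 0 < M := by positivity
  obtain ⟨N₁, hN₁⟩ := Metric.cauchySeq_iff.1 ha (ε / (2 * M)) (by positivity)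
  obtain ⟨N₂, hN₂⟩ := hφS (ε / (2 * M)) (by positivity)
  refine ⟨max N₁ N₂, fun m hm n hn t ht => ?_⟩
  calc dist (y m t) (y n t)
      ≤ (dist (a m) (a n) + ε / (2 * M) * T) * exp (L * T) :=
        (hy m).dist_le (hy n) (hyS m) (hyS n) (hφ m) (fun s hs v hv =>
          (hN₂ m (le_of_max_le_right hm) n (le_of_max_le_right hn) (s, v) ⟨hs, hv⟩).le) t ht
    _ ≤ (ε / (2 * M) + ε / (2 * M) * |T|) * exp (L * T) := by
        gcongr
        · exact (hN₁ m (le_of_max_le_left hm) n (le_of_max_le_left hn)).le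
        · exact le_abs_self T
    _ = ε / 2 := by rw [hM_def]; field_simp
    _ < ε := half_lt_self hε

theorem IsCaraSol.of_tendstoUniformlyOn
    {φ : ℕ → ℝ → EuclideanSpace ℝ (Fin K) → EuclideanSpace ℝ (Fin K)}
    {f : ℝ → EuclideanSpace ℝ (Fin K) → EuclideanSpace ℝ (Fin K)}
    {a : ℕ → EuclideanSpace ℝ (Fin K)} {a₀ : EuclideanSpace ℝ (Fin K)}
    {y : ℕ → ℝ → EuclideanSpace ℝ (Fin K)} {x : ℝ → EuclideanSpace ℝ (Fin K)} (hT : 0 ≤ T)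
    (hy : ∀ i, IsCaraSol K T (φ i) (a i) (y i)) (ha : Tendsto a atTop (𝓝 a₀))
    (hyx : TendstoUniformlyOn y x atTop (Icc 0 T))
    (hφ : TendstoUniformlyOn (fun i t => φ i t (y i t)) (fun t => f t (x t)) atTop (Icc 0 T)) :
    IsCaraSol K T f a₀ x := by
  have hsub : ∀ t ∈ Icc 0 T, Ι 0 t ⊆ Icc 0 T := fun t ht => by
    rw [uIoc_of_le ht.1]; exact Ioc_subset_Icc_self.trans (Icc_subset_Icc_right ht.2)
  have hlim : ∀ t ∈ Icc 0 T,
      Tendsto (fun i => y i t) atTop (𝓝 (a₀ + ∫ τ in (0:ℝ)..t, f τ (x τ))) := fun t ht =>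
    (ha.add ((hφ.mono (hsub t ht)).tendsto_intervalIntegral fun i =>
      (hy i).2.2.1.mono_set (uIcc_subset_uIcc_left (by rwa [uIcc_of_le hT])))).congr
      fun i => ((hy i).2.2.2 t ht).symm
  refine ⟨hyx.continuousOn (Frequently.of_forall fun i => (hy i).1), ?_,
    (hφ.mono (hsub T ⟨hT, le_rfl⟩)).intervalIntegrable fun i => (hy i).2.2.1,
    fun t ht => tendsto_nhds_unique (hyx.tendsto_at ht) (hlim t ht)⟩
  exact tendsto_nhds_unique (hyx.tendsto_at ⟨le_rfl, hT⟩) (ha.congr fun i => ((hy i).2.1).symm)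

end CaratheodorySolutions

theorem limit_ode_existence_from_bounded_perturbed_solutions_general
    (K : ℕ) (T : ℝ) (hT : 0 < T)
    (f : ℝ → EuclideanSpace ℝ (Fin K) → EuclideanSpace ℝ (Fin K))
    (g : ℝ → ℝ → EuclideanSpace ℝ (Fin K) → EuclideanSpace ℝ (Fin K))
    (z : EuclideanSpace ℝ (Fin K)) (zε : ℝ → EuclideanSpace ℝ (Fin K))
    -- (A3)
    (hA3 : ∀ r > (0:ℝ), ∃ L : ℝ,
      (∀ t ∈ Set.Icc (0:ℝ) T, ∀ x ∈ Metric.ball (0 : EuclideanSpace ℝ (Fin K)) r,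
        ∀ y ∈ Metric.ball (0 : EuclideanSpace ℝ (Fin K)) r,
          ‖f t x - f t y‖ ≤ L * ‖x - y‖) ∧
      (∀ ε ∈ Set.Ioc (0:ℝ) 1, ∀ t ∈ Set.Icc (0:ℝ) T,
        ∀ x ∈ Metric.ball (0 : EuclideanSpace ℝ (Fin K)) r,
        ∀ y ∈ Metric.ball (0 : EuclideanSpace ℝ (Fin K)) r,
          ‖(f t x + g ε t x) - (f t y + g ε t y)‖ ≤ L * ‖x - y‖))
    -- (A4)
    (hA4 : (∀ δ > (0:ℝ), ∃ ε₀ > (0:ℝ), ∀ ε ∈ Set.Ioc (0:ℝ) 1, ε ≤ ε₀ →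
        ‖zε ε - z‖ ≤ δ) ∧
      (∀ r > (0:ℝ), ∀ δ > (0:ℝ), ∃ ε₀ > (0:ℝ), ∀ ε ∈ Set.Ioc (0:ℝ) 1, ε ≤ ε₀ →
        ∀ t ∈ Set.Icc (0:ℝ) T, ∀ y ∈ Metric.ball (0 : EuclideanSpace ℝ (Fin K)) r,
          ‖g ε t y‖ ≤ δ))
    (εseq : ℕ → ℝ) (hεmem : ∀ i, εseq i ∈ Set.Ioc (0:ℝ) 1)
    (hεlim : Filter.Tendsto εseq Filter.atTop (nhds 0))
    (y : ℕ → ℝ → EuclideanSpace ℝ (Fin K))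
    (hy : ∀ i, IsCaraSol K T (fun t v => f t v + g (εseq i) t v) (zε (εseq i)) (y i))
    (C2 : ℝ) (hbd : ∀ i, ∀ t ∈ Set.Icc (0:ℝ) T, ‖y i t‖ ≤ C2) :
    ∃ x : ℝ → EuclideanSpace ℝ (Fin K), IsCaraSol K T f z x := by
  obtain ⟨hz, hg⟩ := hA4
  have hC2 : 0 ≤ C2 := (norm_nonneg _).trans (hbd 0 0 ⟨le_rfl, hT.le⟩)
  obtain ⟨L, hLf, hLfg⟩ := hA3 (C2 + 1) (by positivity)
  set S := Metric.closedBall (0 : EuclideanSpace ℝ (Fin K)) C2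
  have hS : S ⊆ Metric.ball 0 (C2 + 1) := Metric.closedBall_subset_ball (lt_add_one C2)
  have hyS : ∀ i, ∀ t ∈ Icc 0 T, y i t ∈ S := fun i t ht => mem_closedBall_zero_iff.2 (hbd i t ht)
  have hzlim : Tendsto (fun i => zε (εseq i)) atTop (𝓝 z) :=
    Metric.nhds_basis_closedBall.tendsto_right_iff.2 fun δ hδ =>
      (hεlim.eventually_of_forall_le hεmem (hz δ hδ)).mono fun i hi => by
        rwa [Metric.mem_closedBall, dist_eq_norm]
  have hφf : TendstoUniformlyOn (fun i (p : ℝ × EuclideanSpace ℝ (Fin K)) =>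
      f p.1 p.2 + g (εseq i) p.1 p.2) (fun p => f p.1 p.2) atTop (Icc 0 T ×ˢ S) :=
    Metric.tendstoUniformlyOn_iff.2 fun δ hδ => (hεlim.eventually_of_forall_le hεmem
      (hg (C2 + 1) (by positivity) (δ / 2) (half_pos hδ))).mono fun i hi p hp => by
        rw [dist_self_add_right]
        exact (hi p.1 hp.1 p.2 (hS hp.2)).trans_lt (half_lt_self hδ)
  obtain ⟨x, hx⟩ := (uniformCauchySeqOn_of_isCaraSol hy hyS
    (fun i t ht => (LipschitzOnWith.of_norm_sub_le' (hLfg (εseq i) (hεmem i) t ht)).mono hS)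
    hzlim.cauchySeq hφf.uniformCauchySeqOn).exists_tendstoUniformlyOn
  have hxS : ∀ t ∈ Icc 0 T, x t ∈ S := fun t ht =>
    Metric.isClosed_closedBall.mem_of_tendsto (hx.tendsto_at ht)
      (Eventually.of_forall fun i => hyS i t ht)
  exact ⟨x, IsCaraSol.of_tendstoUniformlyOn hT.le hy hzlim hx
    (hφf.apply_of_lipschitzOnWith (φ := fun i t v => f t v + g (εseq i) t v) hx hyS hxS
      fun t ht => (LipschitzOnWith.of_norm_sub_le' (hLf t ht)).mono hS)⟩

/-- Under (A1)–(A4), if along a sequence `ε_i → 0` in `(0,1]` the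
perturbed problems `ẏ = f(t,y) + g(ε_i,t,y), y(0) = z_{ε_i}` have solutions `y^{ε_i}`
on `[0,T]` that are uniformly bounded, then `ẋ = f(t,x), x(0) = z` has a solution
on `[0, T]`. -/
theorem limit_ode_existence_from_bounded_perturbed_solutions
    (K : ℕ) (hK : 1 ≤ K) (T : ℝ) (hT : 0 < T)
    (f : ℝ → EuclideanSpace ℝ (Fin K) → EuclideanSpace ℝ (Fin K))
    (g : ℝ → ℝ → EuclideanSpace ℝ (Fin K) → EuclideanSpace ℝ (Fin K))
    (z : EuclideanSpace ℝ (Fin K)) (zε : ℝ → EuclideanSpace ℝ (Fin K))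
    -- (A1)
    (hA1 : ∃ C1 : ℝ, ∀ ε ∈ Set.Ioc (0:ℝ) 1, ∀ t ∈ Set.Icc (0:ℝ) T,
      ‖f t 0‖ + ‖g ε t 0‖ ≤ C1)
    -- (A2)
    (hA2 : (∀ x, Measurable fun t => f t x) ∧
      (∀ ε ∈ Set.Ioc (0:ℝ) 1, ∀ x, Measurable fun t => f t x + g ε t x))
    -- (A3)
    (hA3 : ∀ r > (0:ℝ), ∃ L : ℝ,
      (∀ t ∈ Set.Icc (0:ℝ) T, ∀ x ∈ Metric.ball (0 : EuclideanSpace ℝ (Fin K)) r,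
        ∀ y ∈ Metric.ball (0 : EuclideanSpace ℝ (Fin K)) r,
          ‖f t x - f t y‖ ≤ L * ‖x - y‖) ∧
      (∀ ε ∈ Set.Ioc (0:ℝ) 1, ∀ t ∈ Set.Icc (0:ℝ) T,
        ∀ x ∈ Metric.ball (0 : EuclideanSpace ℝ (Fin K)) r,
        ∀ y ∈ Metric.ball (0 : EuclideanSpace ℝ (Fin K)) r,
          ‖(f t x + g ε t x) - (f t y + g ε t y)‖ ≤ L * ‖x - y‖))
    -- (A4)
    (hA4 : (∀ δ > (0:ℝ), ∃ ε₀ > (0:ℝ), ∀ ε ∈ Set.Ioc (0:ℝ) 1, ε ≤ ε₀ →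
        ‖zε ε - z‖ ≤ δ) ∧
      (∀ r > (0:ℝ), ∀ δ > (0:ℝ), ∃ ε₀ > (0:ℝ), ∀ ε ∈ Set.Ioc (0:ℝ) 1, ε ≤ ε₀ →
        ∀ t ∈ Set.Icc (0:ℝ) T, ∀ y ∈ Metric.ball (0 : EuclideanSpace ℝ (Fin K)) r,
          ‖g ε t y‖ ≤ δ))
    (εseq : ℕ → ℝ) (hεmem : ∀ i, εseq i ∈ Set.Ioc (0:ℝ) 1)
    (hεlim : Filter.Tendsto εseq Filter.atTop (nhds 0))
    (y : ℕ → ℝ → EuclideanSpace ℝ (Fin K))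
    (hy : ∀ i, IsCaraSol K T (fun t v => f t v + g (εseq i) t v) (zε (εseq i)) (y i))
    (C2 : ℝ) (hbd : ∀ i, ∀ t ∈ Set.Icc (0:ℝ) T, ‖y i t‖ ≤ C2) :
    ∃ x : ℝ → EuclideanSpace ℝ (Fin K), IsCaraSol K T f z x :=
  limit_ode_existence_from_bounded_perturbed_solutions_general K T hT f g z zε hA3 hA4 εseq hεmem
    hεlim y hy C2 hbd
end

section
/- Assume the N-player Riccati system has a solution (P_1, …, P_N) on [0, T], and let (S_1, …, S_N) and (r_1, …, r_N) be the solutions of the associated linear terminal value problems. Then: (i) there exist functions θ_1, θ_2 : [0,T] → ℝ^n such that for every i and t, the vector S_i(t) ∈ ℝ^{Nn}, partitioned into N blocks of size n, has i-th block θ_1(t) and all other blocks equal to θ_2(t); (ii) r_1(t) = r_2(t) = ⋯ = r_N(t) for all t ∈ [0, T]. -/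
open Matrix

/-- `D̂ = I_N ⊗ D`, written entrywise. -/
noncomputable def hatD (n n2 N : ℕ) (D : Matrix (Fin n) (Fin n2) ℝ) :
    Matrix (Fin N × Fin n) (Fin N × Fin n2) ℝ :=
  Matrix.of fun p q => if p.1 = q.1 then D p.2 q.2 else 0

/-- Right-hand side of the linear ODE for `S_i`:
`−Âᵀ S_i − P_i B_i R⁻¹ B_iᵀ S_i + P_i Σ_k B_k R⁻¹ B_kᵀ S_k
 + Σ_k P_k B_k R⁻¹ B_kᵀ S_i + K_iᵀ Q η`. -/
noncomputable def sRHS (n n1 N : ℕ) (A G Q Γ : Matrix (Fin n) (Fin n) ℝ)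
    (B : Matrix (Fin n) (Fin n1) ℝ) (R : Matrix (Fin n1) (Fin n1) ℝ)
    (η : Fin n → ℝ)
    (P : Fin N → Matrix (Fin N × Fin n) (Fin N × Fin n) ℝ)
    (S : Fin N → (Fin N × Fin n → ℝ)) (i : Fin N) : Fin N × Fin n → ℝ :=
  -((hatA n N A G)ᵀ *ᵥ S i)
    - (P i * Bblk n n1 N B i * R⁻¹ * (Bblk n n1 N B i)ᵀ) *ᵥ S i
    + P i *ᵥ (∑ k, (Bblk n n1 N B k * R⁻¹ * (Bblk n n1 N B k)ᵀ) *ᵥ S k)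
    + (∑ k, P k * Bblk n n1 N B k * R⁻¹ * (Bblk n n1 N B k)ᵀ) *ᵥ S i
    + (Kblk n N Γ i)ᵀ *ᵥ (Q *ᵥ η)

/-- Right-hand side of the ODE for `r_i`:
`2 S_iᵀ Σ_k B_k R⁻¹ B_kᵀ S_k − S_iᵀ B_i R⁻¹ B_iᵀ S_i − ηᵀ Q η − Tr(D̂ᵀ P_i D̂)`. -/
noncomputable def rRHS (n n1 n2 N : ℕ) (Q : Matrix (Fin n) (Fin n) ℝ)
    (B : Matrix (Fin n) (Fin n1) ℝ) (R : Matrix (Fin n1) (Fin n1) ℝ)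
    (D : Matrix (Fin n) (Fin n2) ℝ) (η : Fin n → ℝ)
    (P : Fin N → Matrix (Fin N × Fin n) (Fin N × Fin n) ℝ)
    (S : Fin N → (Fin N × Fin n → ℝ)) (i : Fin N) : ℝ :=
  2 * (S i ⬝ᵥ (∑ k, (Bblk n n1 N B k * R⁻¹ * (Bblk n n1 N B k)ᵀ) *ᵥ S k))
    - S i ⬝ᵥ ((Bblk n n1 N B i * R⁻¹ * (Bblk n n1 N B i)ᵀ) *ᵥ S i)
    - η ⬝ᵥ (Q *ᵥ η)
    - ((hatD n n2 N D)ᵀ * P i * hatD n n2 N D).trace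

/-! Relabelling the players by a permutation `σ` maps solutions of the coupled system for
`(P_i, S_i, r_i)` to solutions and fixes its terminal data. The right-hand side is polynomial,
hence locally Lipschitz, so uniqueness for the terminal value problem forces the solution to be
fixed by every relabelling. For `S`, invariance under all permutations of the players is exactly
the two-block structure; for `r`, it is the equality of the `r_i`. -/

open Set

section ODE

variable {E : Type*} [NormedAddCommGroup E] [NormedSpace ℝ E] [FiniteDimensional ℝ E]
  {F : E → E} {a b : ℝ}

/-- `F` is only Lipschitz on bounded sets, which suffices: over the compact interval both
trajectories stay in a ball. -/
theorem ODE_solution_unique_of_contDiff_of_mem_Icc_left (hF : ContDiff ℝ 1 F) {f g : ℝ → E}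
    (hf : ∀ t ∈ Icc a b, HasDerivWithinAt f (F (f t)) (Icc a b) t)
    (hg : ∀ t ∈ Icc a b, HasDerivWithinAt g (F (g t)) (Icc a b) t)
    (hb : f b = g b) : EqOn f g (Icc a b) := by
  have hfc : ContinuousOn f (Icc a b) := fun t ht => (hf t ht).continuousWithinAt
  have hgc : ContinuousOn g (Icc a b) := fun t ht => (hg t ht).continuousWithinAt
  obtain ⟨r, hr⟩ := ((isCompact_Icc.image_of_continuousOn hfc).union
    (isCompact_Icc.image_of_continuousOn hgc)).isBounded.subset_closedBall 0
  obtain ⟨K, hK⟩ := hF.contDiffOn.exists_lipschitzOnWith one_ne_zero (convex_closedBall 0 r)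
    (isCompact_closedBall 0 r)
  have hleft {h : ℝ → E} (hh : ∀ t ∈ Icc a b, HasDerivWithinAt h (F (h t)) (Icc a b) t) :
      ∀ t ∈ Ioc a b, HasDerivWithinAt h (F (h t)) (Iic t) t := fun t ht =>
    (hh t (Ioc_subset_Icc_self ht)).mono_of_mem_nhdsWithin (Icc_mem_nhdsLE_of_mem ht)
  exact ODE_solution_unique_of_mem_Icc_left (fun _ _ => hK)
    hfc (hleft hf) (fun t ht => hr (.inl (mem_image_of_mem f (Ioc_subset_Icc_self ht))))
    hgc (hleft hg) (fun t ht => hr (.inr (mem_image_of_mem g (Ioc_subset_Icc_self ht)))) hb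

theorem ODE_solution_comp_eqOn_of_equivariant (hF : ContDiff ℝ 1 F) (L : E →L[ℝ] E)
    (hL : ∀ x, F (L x) = L (F x)) {f : ℝ → E}
    (hf : ∀ t ∈ Icc a b, HasDerivWithinAt f (F (f t)) (Icc a b) t) (hb : L (f b) = f b) :
    EqOn (L ∘ f) f (Icc a b) :=
  ODE_solution_unique_of_contDiff_of_mem_Icc_left hF
    (fun t ht => hL (f t) ▸ L.hasFDerivAt.comp_hasDerivWithinAt t (hf t ht)) hf hb

end ODE

theorem exists_eq_ite_of_perm_invariant {α β : Type*} [DecidableEq α] [Nonempty β]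
    (f : α → α → β)
    (hf : ∀ (σ : Equiv.Perm α) (i j : α), f (σ i) (σ j) = f i j) :
    ∃ c₁ c₂ : β, ∀ i j, f i j = if j = i then c₁ else c₂ := by
  obtain ⟨c₁, hc₁⟩ : ∃ c, ∀ i, f i i = c := by
    rcases isEmpty_or_nonempty α with _ | ⟨⟨a⟩⟩
    · exact ⟨Classical.arbitrary β, fun i => isEmptyElim i⟩
    · exact ⟨f a a, fun i => by simpa using (hf (Equiv.swap i a) i i).symm⟩
  obtain ⟨c₂, hc₂⟩ : ∃ c, ∀ i j, i ≠ j → f i j = c := by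
    by_cases h : ∃ a b : α, a ≠ b
    · obtain ⟨a, b, hab⟩ := h
      refine ⟨f a b, fun i j hij => ?_⟩
      obtain ⟨σ, hσi, hσj⟩ := MulAction.is_two_pretransitive_iff.mp
        (Equiv.Perm.isMultiplyPretransitive α 2) hij hab
      rw [← hf σ, ← Equiv.Perm.smul_def, ← Equiv.Perm.smul_def, hσi, hσj]
    · push Not at h
      exact ⟨Classical.arbitrary β, fun i j hij => absurd (h i j) hij⟩
  refine ⟨c₁, c₂, fun i j => ?_⟩
  split_ifs with hji
  · exact hji ▸ hc₁ i
  · exact hc₂ i j (Ne.symm hji)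

attribute [local instance] Matrix.normedAddCommGroup Matrix.normedSpace

theorem contDiff_matrix {E : Type*} [NormedAddCommGroup E] [NormedSpace ℝ E]
    {m l : Type*} [Fintype m] [Fintype l] {k : WithTop ℕ∞} {f : E → Matrix m l ℝ} :
    ContDiff ℝ k f ↔ ∀ i j, ContDiff ℝ k fun x => f x i j :=
  contDiff_pi.trans (forall_congr' fun _ => contDiff_pi)

theorem hasDerivWithinAt_matrix {m l : Type*} [Fintype m] [Fintype l]
    {f : ℝ → Matrix m l ℝ} {f' : Matrix m l ℝ} {s : Set ℝ} {t : ℝ} :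
    HasDerivWithinAt f f' s t ↔ ∀ i j, HasDerivWithinAt (fun x => f x i j) (f' i j) s t :=
  hasDerivWithinAt_pi.trans (forall_congr' fun _ => hasDerivWithinAt_pi)

namespace Matrix

variable {α : Type*}

theorem submatrix_sum [AddCommMonoid α] {ι m l m' l' : Type*} (s : Finset ι)
    (M : ι → Matrix m l α) (e₁ : m' → m) (e₂ : l' → l) :
    (∑ k ∈ s, M k).submatrix e₁ e₂ = ∑ k ∈ s, (M k).submatrix e₁ e₂ := by
  ext p q
  simp [Matrix.sum_apply]

theorem submatrix_mulVec_comp_equiv [NonUnitalNonAssocSemiring α] {m : Type*} [Fintype m]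
    (M : Matrix m m α) (e : m ≃ m) (v : m → α) :
    M.submatrix e e *ᵥ (v ∘ e) = (M *ᵥ v) ∘ e := by
  simp [submatrix_mulVec_equiv, Function.comp_assoc]

theorem trace_submatrix_equiv [AddCommMonoid α] {m : Type*} [Fintype m] (M : Matrix m m α)
    (e : m ≃ m) : (M.submatrix e e).trace = M.trace :=
  e.sum_comp fun x => M x x

end Matrix

section BlockPermutation

variable {n n1 n2 N : ℕ} (σ : Equiv.Perm (Fin N))

def blockPerm (m : ℕ) : Equiv.Perm (Fin N × Fin m) :=
  σ.prodCongr (Equiv.refl _)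

@[simp]
theorem blockPerm_apply (m : ℕ) (p : Fin N × Fin m) : blockPerm σ m p = (σ p.1, p.2) := rfl

theorem hatA_submatrix_blockPerm (A G : Matrix (Fin n) (Fin n) ℝ) :
    (hatA n N A G).submatrix (blockPerm σ n) (blockPerm σ n) = hatA n N A G := by
  ext p q
  simp [hatA]

theorem hatD_submatrix_blockPerm (D : Matrix (Fin n) (Fin n2) ℝ) :
    (hatD n n2 N D).submatrix (blockPerm σ n) (blockPerm σ n2) = hatD n n2 N D := by
  ext p q
  simp [hatD]

theorem Bblk_submatrix_blockPerm (B : Matrix (Fin n) (Fin n1) ℝ) (k : Fin N) :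
    (Bblk n n1 N B (σ k)).submatrix (blockPerm σ n) id = Bblk n n1 N B k := by
  ext p c
  simp [Bblk]

theorem Kblk_submatrix_blockPerm (Γ : Matrix (Fin n) (Fin n) ℝ) (i : Fin N) :
    (Kblk n N Γ (σ i)).submatrix id (blockPerm σ n) = Kblk n N Γ i := by
  ext r q
  simp [Kblk]

theorem Qblk_submatrix_blockPerm (Q Γ : Matrix (Fin n) (Fin n) ℝ) (i : Fin N) :
    (Qblk n N Q Γ (σ i)).submatrix (blockPerm σ n) (blockPerm σ n) = Qblk n N Q Γ i := by
  rw [Qblk, Qblk, ← Kblk_submatrix_blockPerm σ Γ i, transpose_submatrix,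
    submatrix_mul _ _ _ id _ Function.bijective_id,
    submatrix_mul _ _ _ id _ Function.bijective_id, submatrix_id_id]

theorem Kblk_transpose_mulVec_comp_blockPerm (Γ : Matrix (Fin n) (Fin n) ℝ) (i : Fin N)
    (w : Fin n → ℝ) :
    ((Kblk n N Γ (σ i))ᵀ *ᵥ w) ∘ blockPerm σ n = (Kblk n N Γ i)ᵀ *ᵥ w := by
  funext p
  simp [mulVec, dotProduct, Kblk]

theorem gain_submatrix_blockPerm (B : Matrix (Fin n) (Fin n1) ℝ)
    (R : Matrix (Fin n1) (Fin n1) ℝ) (k : Fin N) :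
    (Bblk n n1 N B (σ k) * R⁻¹ * (Bblk n n1 N B (σ k))ᵀ).submatrix (blockPerm σ n) (blockPerm σ n)
      = Bblk n n1 N B k * R⁻¹ * (Bblk n n1 N B k)ᵀ := by
  rw [← Bblk_submatrix_blockPerm σ B k, transpose_submatrix,
    submatrix_mul _ _ _ id _ Function.bijective_id,
    submatrix_mul _ _ _ id _ Function.bijective_id, submatrix_id_id]

theorem trace_hatD_conj_submatrix_blockPerm (D : Matrix (Fin n) (Fin n2) ℝ)
    (M : Matrix (Fin N × Fin n) (Fin N × Fin n) ℝ) :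
    ((hatD n n2 N D)ᵀ * M.submatrix (blockPerm σ n) (blockPerm σ n) * hatD n n2 N D).trace
      = ((hatD n n2 N D)ᵀ * M * hatD n n2 N D).trace := by
  conv_lhs => rw [← hatD_submatrix_blockPerm σ D]
  rw [transpose_submatrix, submatrix_mul_equiv, submatrix_mul_equiv, trace_submatrix_equiv]

theorem mul_gain_submatrix_blockPerm (M : Matrix (Fin N × Fin n) (Fin N × Fin n) ℝ)
    (B : Matrix (Fin n) (Fin n1) ℝ) (R : Matrix (Fin n1) (Fin n1) ℝ) (k : Fin N) :
    (M * Bblk n n1 N B (σ k) * R⁻¹ * (Bblk n n1 N B (σ k))ᵀ).submatrix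
        (blockPerm σ n) (blockPerm σ n)
      = M.submatrix (blockPerm σ n) (blockPerm σ n) * Bblk n n1 N B k * R⁻¹
          * (Bblk n n1 N B k)ᵀ := by
  have h := gain_submatrix_blockPerm σ B R k
  simp only [Matrix.mul_assoc] at h ⊢
  rw [← submatrix_mul_equiv _ _ _ (blockPerm σ n), h]

end BlockPermutation

section RelabelledSystem

variable {n n1 n2 N : ℕ} (σ : Equiv.Perm (Fin N))
  (A G Q Γ : Matrix (Fin n) (Fin n) ℝ) (B : Matrix (Fin n) (Fin n1) ℝ)
  (R : Matrix (Fin n1) (Fin n1) ℝ) (D : Matrix (Fin n) (Fin n2) ℝ) (η : Fin n → ℝ)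
  (P : Fin N → Matrix (Fin N × Fin n) (Fin N × Fin n) ℝ) (S : Fin N → Fin N × Fin n → ℝ)

theorem sum_gain_mul_submatrix_blockPerm :
    (∑ k, Bblk n n1 N B k * R⁻¹ * (Bblk n n1 N B k)ᵀ * P k).submatrix
        (blockPerm σ n) (blockPerm σ n)
      = ∑ k, Bblk n n1 N B k * R⁻¹ * (Bblk n n1 N B k)ᵀ
          * (P (σ k)).submatrix (blockPerm σ n) (blockPerm σ n) := by
  rw [submatrix_sum, ← Equiv.sum_comp σ]
  refine Finset.sum_congr rfl fun k _ => ?_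
  rw [← submatrix_mul_equiv _ _ _ (blockPerm σ n), gain_submatrix_blockPerm]

theorem sum_mul_gain_submatrix_blockPerm :
    (∑ k, P k * Bblk n n1 N B k * R⁻¹ * (Bblk n n1 N B k)ᵀ).submatrix
        (blockPerm σ n) (blockPerm σ n)
      = ∑ k, (P (σ k)).submatrix (blockPerm σ n) (blockPerm σ n)
          * Bblk n n1 N B k * R⁻¹ * (Bblk n n1 N B k)ᵀ := by
  rw [submatrix_sum, ← Equiv.sum_comp σ]
  exact Finset.sum_congr rfl fun k _ => mul_gain_submatrix_blockPerm σ _ B R k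

theorem sum_gain_mulVec_comp_blockPerm :
    ∑ k, (Bblk n n1 N B k * R⁻¹ * (Bblk n n1 N B k)ᵀ) *ᵥ (S (σ k) ∘ blockPerm σ n)
      = (∑ k, (Bblk n n1 N B k * R⁻¹ * (Bblk n n1 N B k)ᵀ) *ᵥ S k) ∘ blockPerm σ n := by
  have h (k : Fin N) := gain_submatrix_blockPerm σ B R k ▸
    submatrix_mulVec_comp_equiv (Bblk n n1 N B (σ k) * R⁻¹ * (Bblk n n1 N B (σ k))ᵀ)
      (blockPerm σ n) (S (σ k))
  funext p
  simp only [h, Finset.sum_apply, Function.comp_apply]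
  exact Equiv.sum_comp σ fun k => ((Bblk n n1 N B k * R⁻¹ * (Bblk n n1 N B k)ᵀ) *ᵥ S k) _

theorem riccatiRHS_submatrix_blockPerm (i : Fin N) :
    riccatiRHS n n1 N A G Q Γ B R (fun k => (P (σ k)).submatrix (blockPerm σ n) (blockPerm σ n)) i
      = (riccatiRHS n n1 N A G Q Γ B R P (σ i)).submatrix (blockPerm σ n) (blockPerm σ n) := by
  simp only [riccatiRHS, submatrix_add, submatrix_sub, submatrix_neg, Pi.add_apply,
    Pi.sub_apply, Pi.neg_apply]
  rw [← submatrix_mul_equiv _ _ _ (blockPerm σ n), hatA_submatrix_blockPerm,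
    ← submatrix_mul_equiv _ _ _ (blockPerm σ n), ← transpose_submatrix, hatA_submatrix_blockPerm,
    ← submatrix_mul_equiv _ _ _ (blockPerm σ n), sum_gain_mul_submatrix_blockPerm,
    ← submatrix_mul_equiv _ _ _ (blockPerm σ n), sum_mul_gain_submatrix_blockPerm,
    ← submatrix_mul_equiv _ _ _ (blockPerm σ n), mul_gain_submatrix_blockPerm,
    Qblk_submatrix_blockPerm]

theorem sRHS_comp_blockPerm (i : Fin N) :
    sRHS n n1 N A G Q Γ B R η (fun k => (P (σ k)).submatrix (blockPerm σ n) (blockPerm σ n))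
        (fun k => S (σ k) ∘ blockPerm σ n) i
      = sRHS n n1 N A G Q Γ B R η P S (σ i) ∘ blockPerm σ n := by
  simp only [sRHS, Pi.add_comp, Pi.sub_comp, Pi.neg_comp, Kblk_transpose_mulVec_comp_blockPerm,
    ← submatrix_mulVec_comp_equiv, ← sum_gain_mulVec_comp_blockPerm, ← transpose_submatrix,
    hatA_submatrix_blockPerm, mul_gain_submatrix_blockPerm, sum_mul_gain_submatrix_blockPerm]

theorem rRHS_blockPerm (i : Fin N) :
    rRHS n n1 n2 N Q B R D η (fun k => (P (σ k)).submatrix (blockPerm σ n) (blockPerm σ n))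
        (fun k => S (σ k) ∘ blockPerm σ n) i
      = rRHS n n1 n2 N Q B R D η P S (σ i) := by
  simp only [rRHS]
  rw [sum_gain_mulVec_comp_blockPerm, ← gain_submatrix_blockPerm σ B R i,
    submatrix_mulVec_comp_equiv, comp_equiv_dotProduct_comp_equiv,
    comp_equiv_dotProduct_comp_equiv, trace_hatD_conj_submatrix_blockPerm]

end RelabelledSystem

section GameSystem

variable {n n1 n2 N : ℕ}

/-- The unknowns `(P_i, S_i, r_i)_i` of the coupled terminal value problem. -/
abbrev GameState (n N : ℕ) :=
  (Fin N → Matrix (Fin N × Fin n) (Fin N × Fin n) ℝ) × (Fin N → Fin N × Fin n → ℝ) × (Fin N → ℝ)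

noncomputable def gameField (A G Q Γ : Matrix (Fin n) (Fin n) ℝ) (B : Matrix (Fin n) (Fin n1) ℝ)
    (R : Matrix (Fin n1) (Fin n1) ℝ) (D : Matrix (Fin n) (Fin n2) ℝ) (η : Fin n → ℝ)
    (X : GameState n N) : GameState n N :=
  (riccatiRHS n n1 N A G Q Γ B R X.1, sRHS n n1 N A G Q Γ B R η X.1 X.2.1,
    rRHS n n1 n2 N Q B R D η X.1 X.2.1)

noncomputable def relabel (σ : Equiv.Perm (Fin N)) : GameState n N →L[ℝ] GameState n N :=
  LinearMap.toContinuousLinearMap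
    { toFun := fun X => (fun i => (X.1 (σ i)).submatrix (blockPerm σ n) (blockPerm σ n),
        fun i => X.2.1 (σ i) ∘ blockPerm σ n, fun i => X.2.2 (σ i))
      map_add' := fun _ _ => rfl
      map_smul' := fun _ _ => rfl }

theorem relabel_apply (σ : Equiv.Perm (Fin N)) (X : GameState n N) :
    relabel σ X = (fun i => (X.1 (σ i)).submatrix (blockPerm σ n) (blockPerm σ n),
      fun i => X.2.1 (σ i) ∘ blockPerm σ n, fun i => X.2.2 (σ i)) := rfl

theorem contDiff_gameField (A G Q Γ : Matrix (Fin n) (Fin n) ℝ) (B : Matrix (Fin n) (Fin n1) ℝ)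
    (R : Matrix (Fin n1) (Fin n1) ℝ) (D : Matrix (Fin n) (Fin n2) ℝ) (η : Fin n → ℝ) :
    ContDiff ℝ 1 (gameField (N := N) A G Q Γ B R D η) := by
  refine ContDiff.prodMk ?_ (ContDiff.prodMk ?_ ?_) <;> rw [contDiff_pi] <;> intro i
  · rw [contDiff_matrix]; intro p q
    simp only [riccatiRHS, mul_apply, Matrix.sum_apply, Matrix.add_apply, Matrix.sub_apply,
      Matrix.neg_apply, transpose_apply]
    fun_prop
  · rw [contDiff_pi]; intro p
    simp only [sRHS, mulVec, dotProduct, mul_apply, Matrix.sum_apply, transpose_apply,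
      Pi.add_apply, Pi.sub_apply, Pi.neg_apply, Finset.sum_apply]
    fun_prop
  · simp only [rRHS, mulVec, dotProduct, trace, diag, mul_apply, transpose_apply,
      Finset.sum_apply]
    fun_prop

theorem gameField_relabel (σ : Equiv.Perm (Fin N)) (A G Q Γ : Matrix (Fin n) (Fin n) ℝ)
    (B : Matrix (Fin n) (Fin n1) ℝ) (R : Matrix (Fin n1) (Fin n1) ℝ)
    (D : Matrix (Fin n) (Fin n2) ℝ) (η : Fin n → ℝ) (X : GameState n N) :
    gameField A G Q Γ B R D η (relabel σ X) = relabel σ (gameField A G Q Γ B R D η X) := by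
  simp only [gameField, relabel_apply, Prod.mk.injEq]
  exact ⟨funext fun i => riccatiRHS_submatrix_blockPerm σ A G Q Γ B R X.1 i,
    funext fun i => sRHS_comp_blockPerm σ A G Q Γ B R η X.1 X.2.1 i,
    funext fun i => rRHS_blockPerm σ Q B R D η X.1 X.2.1 i⟩

def gameTrajectory (P : Fin N → ℝ → Matrix (Fin N × Fin n) (Fin N × Fin n) ℝ)
    (S : Fin N → ℝ → Fin N × Fin n → ℝ) (rr : Fin N → ℝ → ℝ) (t : ℝ) : GameState n N :=
  (fun i => P i t, fun i => S i t, fun i => rr i t)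

theorem hasDerivWithinAt_gameTrajectory {A G Q Γ : Matrix (Fin n) (Fin n) ℝ}
    {B : Matrix (Fin n) (Fin n1) ℝ} {R : Matrix (Fin n1) (Fin n1) ℝ}
    {D : Matrix (Fin n) (Fin n2) ℝ} {η : Fin n → ℝ}
    {P : Fin N → ℝ → Matrix (Fin N × Fin n) (Fin N × Fin n) ℝ}
    {S : Fin N → ℝ → Fin N × Fin n → ℝ} {rr : Fin N → ℝ → ℝ} {s : Set ℝ} {t : ℝ}
    (hP : ∀ i p q, HasDerivWithinAt (fun s => P i s p q)
      (riccatiRHS n n1 N A G Q Γ B R (fun k => P k t) i p q) s t)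
    (hS : ∀ i q, HasDerivWithinAt (fun s => S i s q)
      (sRHS n n1 N A G Q Γ B R η (fun k => P k t) (fun k => S k t) i q) s t)
    (hr : ∀ i, HasDerivWithinAt (rr i)
      (rRHS n n1 n2 N Q B R D η (fun k => P k t) (fun k => S k t) i) s t) :
    HasDerivWithinAt (gameTrajectory P S rr)
      (gameField A G Q Γ B R D η (gameTrajectory P S rr t)) s t :=
  (hasDerivWithinAt_pi.2 fun i => hasDerivWithinAt_matrix.2 (hP i)).prodMk
    ((hasDerivWithinAt_pi.2 fun i => hasDerivWithinAt_pi.2 (hS i)).prodMk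
      (hasDerivWithinAt_pi.2 hr))

theorem relabel_gameTrajectory_of_terminal (σ : Equiv.Perm (Fin N))
    {Qf Γf : Matrix (Fin n) (Fin n) ℝ} {ηf : Fin n → ℝ}
    {P : Fin N → ℝ → Matrix (Fin N × Fin n) (Fin N × Fin n) ℝ}
    {S : Fin N → ℝ → Fin N × Fin n → ℝ} {rr : Fin N → ℝ → ℝ} {T : ℝ}
    (hP : ∀ i, P i T = Qblk n N Qf Γf i) (hS : ∀ i, S i T = -((Kblk n N Γf i)ᵀ *ᵥ (Qf *ᵥ ηf)))
    (hr : ∀ i, rr i T = ηf ⬝ᵥ (Qf *ᵥ ηf)) :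
    relabel σ (gameTrajectory P S rr T) = gameTrajectory P S rr T := by
  simp only [relabel_apply, gameTrajectory, hP, hS, hr, Qblk_submatrix_blockPerm, Pi.neg_comp,
    Kblk_transpose_mulVec_comp_blockPerm]

end GameSystem

theorem S_block_representation_and_r_equal_general
    (n n1 n2 N : ℕ)
    (T : ℝ)
    (A G Q Qf Γ Γf : Matrix (Fin n) (Fin n) ℝ)
    (B : Matrix (Fin n) (Fin n1) ℝ) (R : Matrix (Fin n1) (Fin n1) ℝ)
    (D : Matrix (Fin n) (Fin n2) ℝ) (η ηf : Fin n → ℝ)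
    (P : Fin N → ℝ → Matrix (Fin N × Fin n) (Fin N × Fin n) ℝ)
    (hP : IsRiccatiSol n n1 N A G Q Qf Γ Γf B R 0 T P)
    (S : Fin N → ℝ → (Fin N × Fin n → ℝ))
    (hS : (∀ i, ∀ t ∈ Set.Icc (0:ℝ) T, ∀ q,
        HasDerivWithinAt (fun s => S i s q)
          (sRHS n n1 N A G Q Γ B R η (fun k => P k t) (fun k => S k t) i q)
          (Set.Icc (0:ℝ) T) t)
      ∧ ∀ i, S i T = -((Kblk n N Γf i)ᵀ *ᵥ (Qf *ᵥ ηf)))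
    (rr : Fin N → ℝ → ℝ)
    (hr : (∀ i, ∀ t ∈ Set.Icc (0:ℝ) T,
        HasDerivWithinAt (rr i)
          (rRHS n n1 n2 N Q B R D η (fun k => P k t) (fun k => S k t) i)
          (Set.Icc (0:ℝ) T) t)
      ∧ ∀ i, rr i T = ηf ⬝ᵥ (Qf *ᵥ ηf)) :
    (∃ θ1 θ2 : ℝ → Fin n → ℝ,
      ∀ i : Fin N, ∀ t ∈ Set.Icc (0:ℝ) T, ∀ (j : Fin N) (r : Fin n),
        S i t (j, r) = if j = i then θ1 t r else θ2 t r) ∧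
    (∀ i j : Fin N, ∀ t ∈ Set.Icc (0:ℝ) T, rr i t = rr j t) := by
  obtain ⟨hPd, hPT⟩ := hP
  obtain ⟨hSd, hST⟩ := hS
  obtain ⟨hrd, hrT⟩ := hr
  have hinv (σ : Equiv.Perm (Fin N)) :
      EqOn (relabel σ ∘ gameTrajectory P S rr) (gameTrajectory P S rr) (Icc 0 T) :=
    ODE_solution_comp_eqOn_of_equivariant (contDiff_gameField A G Q Γ B R D η) (relabel σ)
      (gameField_relabel σ A G Q Γ B R D η)
      (fun t ht => hasDerivWithinAt_gameTrajectory (hPd · t ht) (hSd · t ht) (hrd · t ht))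
      (relabel_gameTrajectory_of_terminal σ hPT hST hrT)
  refine ⟨?_, fun i j t ht => by
    simpa [relabel_apply, gameTrajectory] using congrArg (·.2.2 j) (hinv (Equiv.swap i j) ht)⟩
  have hθ (t : ℝ) (r : Fin n) : ∃ c : ℝ × ℝ, t ∈ Icc 0 T →
      ∀ i j, S i t (j, r) = if j = i then c.1 else c.2 := by
    by_cases ht : t ∈ Icc 0 T
    · obtain ⟨c₁, c₂, hc⟩ := exists_eq_ite_of_perm_invariant (fun i j => S i t (j, r))
        fun σ i j => congrFun (congrArg (·.2.1 i) (hinv σ ht)) (j, r)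
      exact ⟨(c₁, c₂), fun _ => hc⟩
    · exact ⟨0, fun h => absurd h ht⟩
  choose c hc using hθ
  exact ⟨fun t r => (c t r).1, fun t r => (c t r).2, fun i t ht j r => hc t r ht i j⟩

/-- If the `N`-player Riccati system has a solution `(P_1,…,P_N)` on
`[0,T]`, and `(S_1,…,S_N)`, `(r_1,…,r_N)` solve the associated linear terminal value
problems, then each `S_i(t)` has `i`-th block `θ₁(t)` and all other blocks `θ₂(t)`,
and `r_1 = r_2 = ⋯ = r_N` on `[0,T]`. -/
theorem S_block_representation_and_r_equal
    (n n1 n2 N : ℕ) (hn : 0 < n) (hn1 : 0 < n1) (hn2 : 0 < n2) (hN : 0 < N)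
    (T : ℝ) (hT : 0 < T)
    (A G Q Qf Γ Γf : Matrix (Fin n) (Fin n) ℝ)
    (B : Matrix (Fin n) (Fin n1) ℝ) (R : Matrix (Fin n1) (Fin n1) ℝ)
    (D : Matrix (Fin n) (Fin n2) ℝ) (η ηf : Fin n → ℝ)
    (hQ : Q.PosSemidef) (hQf : Qf.PosSemidef) (hR : R.PosDef)
    (P : Fin N → ℝ → Matrix (Fin N × Fin n) (Fin N × Fin n) ℝ)
    (hP : IsRiccatiSol n n1 N A G Q Qf Γ Γf B R 0 T P)
    (S : Fin N → ℝ → (Fin N × Fin n → ℝ))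
    (hS : (∀ i, ∀ t ∈ Set.Icc (0:ℝ) T, ∀ q,
        HasDerivWithinAt (fun s => S i s q)
          (sRHS n n1 N A G Q Γ B R η (fun k => P k t) (fun k => S k t) i q)
          (Set.Icc (0:ℝ) T) t)
      ∧ ∀ i, S i T = -((Kblk n N Γf i)ᵀ *ᵥ (Qf *ᵥ ηf)))
    (rr : Fin N → ℝ → ℝ)
    (hr : (∀ i, ∀ t ∈ Set.Icc (0:ℝ) T,
        HasDerivWithinAt (rr i)
          (rRHS n n1 n2 N Q B R D η (fun k => P k t) (fun k => S k t) i)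
          (Set.Icc (0:ℝ) T) t)
      ∧ ∀ i, rr i T = ηf ⬝ᵥ (Qf *ᵥ ηf)) :
    (∃ θ1 θ2 : ℝ → Fin n → ℝ,
      ∀ i : Fin N, ∀ t ∈ Set.Icc (0:ℝ) T, ∀ (j : Fin N) (r : Fin n),
        S i t (j, r) = if j = i then θ1 t r else θ2 t r) ∧
    (∀ i j : Fin N, ∀ t ∈ Set.Icc (0:ℝ) T, rr i t = rr j t) :=
  S_block_representation_and_r_equal_general n n1 n2 N T A G Q Qf Γ Γf B R D η ηf P hP S hS rr hr
end
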